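/- arXiv:1211.7117 — 9 statements merged into one kernel-verified Lean document; each statement's English description precedes it below -/
import Mathlib

section
/- For a permutation p of length n ≥ 2 and indices 1 ≤ j < k ≤ n, deleting the j-th entry of p (and relabeling order-isomorphically) yields the same permutation of length n−1 as deleting the k-th entry if and only if the entries p_j, p_{j+1}, …, p_k form a run, i.e., consecutive entries differ by exactly 1 (all +1 or all −1). -/
open Finset

/-- `del p i`: delete the `i`-th entry of `p` and relabel order-isomorphically. -/
def del {n : ℕ} (p : Equiv.Perm (Fin (n + 1))) (i : Fin (n + 1)) : Equiv.Perm (Fin n) :=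
  (Tuple.sort fun j => p (i.succAbove j))⁻¹

/-- `D1 p`: the set of `(n-1)`-patterns of `p`. -/
def D1 {n : ℕ} (p : Equiv.Perm (Fin (n + 1))) : Finset (Equiv.Perm (Fin n)) :=
  Finset.univ.image (del p)

/-- `ins q j k`: insert the value `k - 1/2` just left of position `j` and relabel. -/
def ins {n : ℕ} (q : Equiv.Perm (Fin n)) (j k : Fin (n + 1)) : Equiv.Perm (Fin (n + 1)) :=
  (finSuccEquiv' j).trans ((Equiv.optionCongr q).trans (finSuccEquiv' k).symm)

/-- `C p`: the number of bonds of `p` (adjacent positions with values differing by 1). -/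
def C {n : ℕ} (p : Equiv.Perm (Fin (n + 1))) : ℕ :=
  (Finset.univ.filter fun i : Fin n =>
    Nat.dist (p i.castSucc).val (p i.succ).val = 1).card

/-- minimum gap of an injective word `f`, via the taxicab metric on (index, value). -/
noncomputable def mgF {n : ℕ} (f : Fin n → ℕ) : ℕ :=
  sInf {m : ℕ | ∃ i j : Fin n, i < j ∧ Nat.dist i.val j.val + Nat.dist (f i) (f j) = m}

/-- minimum gap of a permutation. -/
noncomputable def mg {n : ℕ} (p : Equiv.Perm (Fin n)) : ℕ := mgF fun i => (p i).val

/-- the span of entries `p i` and `p j`: indices of entries strictly between them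
horizontally or vertically. -/
def span {n : ℕ} (p : Equiv.Perm (Fin n)) (i j : Fin n) : Finset (Fin n) :=
  Finset.univ.filter fun m =>
    (i < m ∧ m < j) ∨ (min (p i) (p j) < p m ∧ p m < max (p i) (p j))

/-- the pattern of `p` after deleting the entries at positions in `S`, encoded as the
list of (0-based) ranks of the remaining entries in positional order. -/
def patList {n : ℕ} (p : Equiv.Perm (Fin n)) (S : Finset (Fin n)) : List ℕ :=
  let l := (Sᶜ.sort (· ≤ ·)).map fun t => (p t).val
  l.map fun v => (l.filter fun w => w < v).length

/-- `Dk p k`: the set of distinct `(n-k)`-patterns of `p`. -/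
def Dk {n : ℕ} (p : Equiv.Perm (Fin n)) (k : ℕ) : Finset (List ℕ) :=
  (Finset.univ.filter fun S : Finset (Fin n) => S.card = k).image (patList p)

/-! ### Auxiliary material -/

lemma succAbove_val' {n : ℕ} (i : Fin (n + 1)) (a : Fin n) :
    (i.succAbove a).val = if a.val < i.val then a.val else a.val + 1 := by
  rw [Fin.succAbove]
  split_ifs with h1 h2 h3 <;>
    simp_all [Fin.lt_def, Fin.castSucc, Fin.succ, Fin.castAdd, Fin.castLE]

lemma eq_sort_iff_strictMono' {n : ℕ} {α : Type*} [LinearOrder α] {f : Fin n → α}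
    (hf : Function.Injective f) (σ : Equiv.Perm (Fin n)) :
    σ = Tuple.sort f ↔ StrictMono (f ∘ σ) := by
  rw [Tuple.eq_sort_iff]
  constructor
  · rintro ⟨h1, _⟩
    exact h1.strictMono_of_injective (hf.comp σ.injective)
  · intro h
    exact ⟨h.monotone, fun i j hij hf' => ((hij.ne (σ.injective (hf hf'))).elim)⟩

lemma sort_eq_sort_iff' {n : ℕ} {α : Type*} [LinearOrder α] {f g : Fin n → α}
    (hf : Function.Injective f) (hg : Function.Injective g) :
    Tuple.sort f = Tuple.sort g ↔ ∀ a b, (f a < f b ↔ g a < g b) := by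
  constructor
  · intro h a b
    have hfs : StrictMono (f ∘ Tuple.sort f) := (eq_sort_iff_strictMono' hf _).mp rfl
    have hgs : StrictMono (g ∘ Tuple.sort f) := by
      rw [h]; exact (eq_sort_iff_strictMono' hg _).mp rfl
    set σ := Tuple.sort f with hσ
    have e1 : f a < f b ↔ σ⁻¹ a < σ⁻¹ b := by
      simpa using hfs.lt_iff_lt (a := σ⁻¹ a) (b := σ⁻¹ b)
    have e2 : g a < g b ↔ σ⁻¹ a < σ⁻¹ b := by
      simpa using hgs.lt_iff_lt (a := σ⁻¹ a) (b := σ⁻¹ b)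
    rw [e1, e2]
  · intro h
    have : StrictMono (g ∘ Tuple.sort f) := fun x y hxy =>
      (h _ _).mp (((eq_sort_iff_strictMono' hf _).mp rfl) hxy)
    exact (eq_sort_iff_strictMono' hg _).mpr this

lemma del_eq_del_iff {n : ℕ} (p : Equiv.Perm (Fin (n + 1))) (j k : Fin (n + 1)) :
    del p j = del p k ↔
      ∀ a b : Fin n, (p (j.succAbove a) < p (j.succAbove b) ↔
        p (k.succAbove a) < p (k.succAbove b)) := by
  have hj : Function.Injective fun m : Fin n => p (j.succAbove m) :=
    fun a b h => Fin.succAbove_right_injective (p.injective h)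
  have hk : Function.Injective fun m : Fin n => p (k.succAbove m) :=
    fun a b h => Fin.succAbove_right_injective (p.injective h)
  rw [del, del, inv_inj]
  exact sort_eq_sort_iff' hj hk

/-- values of a permutation as a total function on `ℕ`. -/
def Fv {n : ℕ} (p : Equiv.Perm (Fin (n + 1))) (m : ℕ) : ℕ :=
  if h : m < n + 1 then (p ⟨m, h⟩).val else 0

lemma Fv_apply {n : ℕ} (p : Equiv.Perm (Fin (n + 1))) (c : Fin (n + 1)) :
    Fv p c.val = (p c).val := by
  simp [Fv, c.isLt]

/-- core combinatorial lemma over ℕ -/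
lemma core_run (n J K : ℕ) (F : ℕ → ℕ) (hJK : J < K) (hK : K ≤ n)
    (hFle : ∀ m, m ≤ n → F m ≤ n)
    (hsurj : ∀ v, v ≤ n → ∃ c, c ≤ n ∧ F c = v)
    (Hnat : ∀ a b, a < n → b < n →
      (F (if a < J then a else a + 1) < F (if b < J then b else b + 1) ↔
       F (if a < K then a else a + 1) < F (if b < K then b else b + 1)))
    (hdir : F J < F (J + 1)) :
    ∀ a b, J ≤ a → a ≤ b → b ≤ K → F b = F a + (b - a) := by
  have M1 : ∀ a, J ≤ a → a + 2 ≤ K → (F a < F (a + 1) ↔ F (a + 1) < F (a + 2)) := by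
    intro a ha hak
    have h := Hnat a (a + 1) (by omega) (by omega)
    rw [if_neg (by omega), if_neg (by omega), if_pos (by omega), if_pos (by omega)] at h
    exact h.symm
  have Mono0 : ∀ d, J + d + 1 ≤ K → F (J + d) < F (J + d + 1) := by
    intro d
    induction d with
    | zero => intro _; simpa using hdir
    | succ m ih =>
      intro h
      have h2 := (M1 (J + m) (by omega) (by omega)).mp (ih (by omega))
      rw [show J + (m + 1) = J + m + 1 by omega, show J + m + 1 + 1 = J + m + 2 by omega]
      exact h2
  have Mono : ∀ a, J ≤ a → a + 1 ≤ K → F a < F (a + 1) := by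
    intro a ha h
    have := Mono0 (a - J) (by omega)
    rwa [show J + (a - J) = a by omega] at this
  have SMO0 : ∀ d a, J ≤ a → a + d + 1 ≤ K → F a < F (a + d + 1) := by
    intro d
    induction d with
    | zero => intro a ha h; exact Mono a ha (by omega)
    | succ m ih =>
      intro a ha h
      have h1 := ih a ha (by omega)
      have h2 := Mono (a + m + 1) (by omega) (by omega)
      have e : a + (m + 1) + 1 = a + m + 1 + 1 := by omega
      rw [e]; exact h1.trans h2
  have SMO : ∀ a b, J ≤ a → a < b → b ≤ K → F a < F b := by
    intro a b ha hab hb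
    have := SMO0 (b - a - 1) a ha (by omega)
    rwa [show a + (b - a - 1) + 1 = b by omega] at this
  have M2 : ∀ a c, J ≤ a → a + 1 ≤ K → c ≤ n → (c < J ∨ K < c) →
      (F c < F (a + 1) ↔ F c < F a) := by
    intro a c ha hak hc hcout
    rcases hcout with hc1 | hc2
    · have h := Hnat c a (by omega) (by omega)
      rwa [if_pos (by omega), if_neg (by omega), if_pos (by omega), if_pos (by omega)] at h
    · have h := Hnat (c - 1) a (by omega) (by omega)
      rw [if_neg (by omega), if_neg (by omega), if_neg (by omega), if_pos (by omega),
        show c - 1 + 1 = c by omega] at h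
      exact h
  have Step1 : ∀ a, J ≤ a → a + 1 ≤ K → F (a + 1) = F a + 1 := by
    intro a ha hak
    by_contra hne
    have hlt : F a < F (a + 1) := Mono a ha hak
    have hgap : F a + 1 < F (a + 1) := by omega
    obtain ⟨c, hc, hFc⟩ := hsurj (F a + 1) (by have := hFle (a + 1) (by omega); omega)
    have hca : c ≠ a := fun h => by subst h; omega
    have hca1 : c ≠ a + 1 := fun h => by subst h; omega
    rcases le_or_gt J c with hJc | hJc
    · rcases le_or_gt c K with hcK | hcK
      · rcases lt_or_gt_of_ne hca with h | h
        · have := SMO c a hJc h (by omega); omega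
        · rcases lt_or_gt_of_ne hca1 with h2 | h2
          · omega
          · have := SMO (a + 1) c (by omega) h2 hcK; omega
      · have := (M2 a c ha hak hc (Or.inr hcK)).mp (by omega); omega
    · have := (M2 a c ha hak hc (Or.inl hJc)).mp (by omega); omega
  have Fin0 : ∀ d a, J ≤ a → a + d ≤ K → F (a + d) = F a + d := by
    intro d
    induction d with
    | zero => intro a _ _; simp
    | succ m ih =>
      intro a ha h
      have h1 := ih a ha (by omega)
      have h2 := Step1 (a + m) (by omega) (by omega)
      have e : a + (m + 1) = a + m + 1 := by omega
      rw [e]; omega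
  intro a b ha hab hb
  have := Fin0 (b - a) a ha (by omega)
  rw [show a + (b - a) = b by omega] at this
  omega

/-- deleting entries `j` and `k` give the same pattern iff `p_j, …, p_k` form a run. -/
theorem stmt0 {n : ℕ} (hn : 1 ≤ n) (p : Equiv.Perm (Fin (n + 1))) (j k : Fin (n + 1))
    (hjk : j < k) :
    del p j = del p k ↔
      ((∀ a b : Fin (n + 1), j ≤ a → a ≤ b → b ≤ k →
          (p b).val = (p a).val + (b.val - a.val)) ∨
       (∀ a b : Fin (n + 1), j ≤ a → a ≤ b → b ≤ k →
          (p a).val = (p b).val + (b.val - a.val))) := by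
  have hJK : j.val < k.val := hjk
  have hK : k.val ≤ n := Nat.lt_succ_iff.mp k.isLt
  have hFle : ∀ m, m ≤ n → Fv p m ≤ n := by
    intro m hm
    rw [Fv, dif_pos (by omega)]
    exact Nat.lt_succ_iff.mp (Fin.isLt _)
  rw [del_eq_del_iff]
  constructor
  · intro H
    have Hnat : ∀ a b, a < n → b < n →
        (Fv p (if a < j.val then a else a + 1) < Fv p (if b < j.val then b else b + 1) ↔
         Fv p (if a < k.val then a else a + 1) < Fv p (if b < k.val then b else b + 1)) := by
      intro a b ha hb
      have h := H ⟨a, ha⟩ ⟨b, hb⟩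
      simp only [Fin.lt_def, ← Fv_apply p, succAbove_val'] at h
      exact h
    have hsurj : ∀ v, v ≤ n → ∃ c, c ≤ n ∧ Fv p c = v := by
      intro v hv
      refine ⟨(p⁻¹ ⟨v, by omega⟩).val, Nat.lt_succ_iff.mp (Fin.isLt _), ?_⟩
      rw [Fv_apply]
      simp
    have hne : Fv p j.val ≠ Fv p (j.val + 1) := by
      intro h
      rw [show Fv p j.val = (p ⟨j.val, by omega⟩).val from dif_pos (by omega),
        show Fv p (j.val + 1) = (p ⟨j.val + 1, by omega⟩).val from dif_pos (by omega)] at h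
      have := p.injective (Fin.ext h)
      simpa using congrArg Fin.val this
    rcases Nat.lt_or_ge (Fv p j.val) (Fv p (j.val + 1)) with hd | hd
    · left
      intro a b h1 h2 h3
      have := core_run n j.val k.val (Fv p) hJK hK hFle hsurj Hnat hd a.val b.val
        (Fin.le_def.mp h1) (Fin.le_def.mp h2) (Fin.le_def.mp h3)
      rwa [Fv_apply, Fv_apply] at this
    · right
      set F := Fv p with hF
      have hd' : F (j.val + 1) < F j.val := by omega
      set F' : ℕ → ℕ := fun m => n - F m with hF'
      have hFle' : ∀ m, m ≤ n → F' m ≤ n := fun m _ => Nat.sub_le n (F m)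
      have hsurj' : ∀ v, v ≤ n → ∃ c, c ≤ n ∧ F' c = v := by
        intro v hv
        obtain ⟨c, hc, hFc⟩ := hsurj (n - v) (by omega)
        exact ⟨c, hc, by simp only [hF']; omega⟩
      have Hnat' : ∀ a b, a < n → b < n →
          (F' (if a < j.val then a else a + 1) < F' (if b < j.val then b else b + 1) ↔
           F' (if a < k.val then a else a + 1) < F' (if b < k.val then b else b + 1)) := by
        intro a b ha hb
        have h := Hnat b a hb ha
        have b1 : F (if a < j.val then a else a + 1) ≤ n := hFle _ (by split_ifs <;> omega)
        have b2 : F (if b < j.val then b else b + 1) ≤ n := hFle _ (by split_ifs <;> omega)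
        have b3 : F (if a < k.val then a else a + 1) ≤ n := hFle _ (by split_ifs <;> omega)
        have b4 : F (if b < k.val then b else b + 1) ≤ n := hFle _ (by split_ifs <;> omega)
        simp only [hF']
        omega
      have hdir' : F' j.val < F' (j.val + 1) := by
        have b1 : F j.val ≤ n := hFle _ (by omega)
        simp only [hF']
        omega
      intro a b h1 h2 h3
      have := core_run n j.val k.val F' hJK hK hFle' hsurj' Hnat' hdir' a.val b.val
        (Fin.le_def.mp h1) (Fin.le_def.mp h2) (Fin.le_def.mp h3)
      have e1 : F a.val = (p a).val := Fv_apply p a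
      have e2 : F b.val = (p b).val := Fv_apply p b
      have b1 : F a.val ≤ n := hFle _ (Nat.lt_succ_iff.mp a.isLt)
      have b2 : F b.val ≤ n := hFle _ (Nat.lt_succ_iff.mp b.isLt)
      simp only [hF'] at this
      omega
  · intro hrun
    have same : ∀ c : Fin n, c.val < j.val ∨ k.val ≤ c.val →
        p (j.succAbove c) = p (k.succAbove c) := by
      intro c hc
      congr 1
      apply Fin.ext
      rw [succAbove_val', succAbove_val']
      rcases hc with h | h
      · rw [if_pos h, if_pos (by omega)]
      · rw [if_neg (by omega), if_neg (by omega)]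
    rcases hrun with L | R
    · have Rel : ∀ c : Fin n, (p (j.succAbove c)).val = (p (k.succAbove c)).val ∨
          (p (j.succAbove c)).val = (p (k.succAbove c)).val + 1 := by
        intro c
        rcases lt_or_ge c.val j.val with h1 | h1
        · exact Or.inl (by rw [same c (Or.inl h1)])
        rcases lt_or_ge c.val k.val with h2 | h2
        · right
          have hle1 : j ≤ k.succAbove c := by
            rw [Fin.le_def, succAbove_val', if_pos h2]; omega
          have hle2 : k.succAbove c ≤ j.succAbove c := by
            rw [Fin.le_def, succAbove_val', succAbove_val', if_pos h2, if_neg (by omega)]; omega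
          have hle3 : j.succAbove c ≤ k := by
            rw [Fin.le_def, succAbove_val', if_neg (by omega)]; omega
          have h := L _ _ hle1 hle2 hle3
          rw [succAbove_val', succAbove_val', if_pos h2, if_neg (by omega)] at h
          omega
        · exact Or.inl (by rw [same c (Or.inr h2)])
      intro a b
      by_cases hab : a = b
      · subst hab; simp
      have ne1 : (p (j.succAbove a)).val ≠ (p (j.succAbove b)).val := fun h =>
        hab (Fin.succAbove_right_injective (p.injective (Fin.ext h)))
      have ne2 : (p (k.succAbove a)).val ≠ (p (k.succAbove b)).val := fun h =>
        hab (Fin.succAbove_right_injective (p.injective (Fin.ext h)))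
      have r1 := Rel a
      have r2 := Rel b
      simp only [Fin.lt_def]
      omega
    · have Rel : ∀ c : Fin n, (p (k.succAbove c)).val = (p (j.succAbove c)).val ∨
          (p (k.succAbove c)).val = (p (j.succAbove c)).val + 1 := by
        intro c
        rcases lt_or_ge c.val j.val with h1 | h1
        · exact Or.inl (by rw [same c (Or.inl h1)])
        rcases lt_or_ge c.val k.val with h2 | h2
        · right
          have hle1 : j ≤ k.succAbove c := by
            rw [Fin.le_def, succAbove_val', if_pos h2]; omega
          have hle2 : k.succAbove c ≤ j.succAbove c := by
            rw [Fin.le_def, succAbove_val', succAbove_val', if_pos h2, if_neg (by omega)]; omega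
          have hle3 : j.succAbove c ≤ k := by
            rw [Fin.le_def, succAbove_val', if_neg (by omega)]; omega
          have h := R _ _ hle1 hle2 hle3
          rw [succAbove_val', succAbove_val', if_pos h2, if_neg (by omega)] at h
          omega
        · exact Or.inl (by rw [same c (Or.inr h2)])
      intro a b
      by_cases hab : a = b
      · subst hab; simp
      have ne1 : (p (j.succAbove a)).val ≠ (p (j.succAbove b)).val := fun h =>
        hab (Fin.succAbove_right_injective (p.injective (Fin.ext h)))
      have ne2 : (p (k.succAbove a)).val ≠ (p (k.succAbove b)).val := fun h =>
        hab (Fin.succAbove_right_injective (p.injective (Fin.ext h)))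
      have r1 := Rel a
      have r2 := Rel b
      simp only [Fin.lt_def]
      omega
end

section
/- For any permutation p of length n, the number of distinct (n−1)-patterns of p equals n − C(p), where C(p) is the number of bonds of p. -/
/-!
Deleting either end of a bond gives the same pattern. Conversely, if `del p a = del p b` with
`a < b`, then position `a` of this common pattern is the image of `p (a + 1)` under the first
deletion and of `p a` under the second; a value of `Fin n` lifts back to `Fin (n + 1)` only as
itself or its successor, so `p a` and `p (a + 1)` differ by one. Hence the fibres of
`i ↦ del p i` are runs of positions linked by bonds, and the number of distinct patterns is
`n + 1` minus the number of bonds.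
-/

open Finset

lemma Fin.image_univ_succ {β : Type*} [DecidableEq β] {n : ℕ} (f : Fin (n + 1) → β) :
    univ.image f = insert (f 0) (univ.image (f ∘ Fin.succ)) := by
  ext b
  simp [Fin.exists_fin_succ, eq_comm]

/-- The hypothesis says that each fibre of `f` is an interval of positions. -/
theorem card_image_add_card_adjacent_eq {β : Type*} [DecidableEq β] :
    ∀ {n : ℕ} (f : Fin (n + 1) → β),
      (∀ (a : Fin n) (b : Fin (n + 1)), a.castSucc < b → f a.castSucc = f b →
        f a.castSucc = f a.succ) →
      #(univ.image f) + #{i : Fin n | f i.castSucc = f i.succ} = n + 1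
  | 0, f, _ => by simp
  | n + 1, f, hf => by
    have ih := card_image_add_card_adjacent_eq (f ∘ Fin.succ) fun a b hab h => by
      simp only [Function.comp_apply, Fin.succ_castSucc] at h ⊢
      exact hf a.succ b.succ (by rw [← Fin.succ_castSucc]; exact Fin.succ_lt_succ_iff.2 hab) h
    rw [Fin.image_univ_succ, Fin.card_filter_univ_succ']
    simp only [Function.comp_apply, Fin.succ_castSucc] at ih ⊢
    by_cases h01 : f 0 = f 1
    · have hmem : f 0 ∈ univ.image (f ∘ Fin.succ) := mem_image.2 ⟨0, mem_univ _, h01.symm⟩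
      rw [card_insert_of_mem hmem]
      simp only [Fin.castSucc_zero, Fin.succ_zero_eq_one, h01, if_true]
      omega
    · have hnot : f 0 ∉ univ.image (f ∘ Fin.succ) := by
        simp only [mem_image, mem_univ, true_and, Function.comp_apply, not_exists]
        exact fun b hb => h01 (hf 0 b.succ (Fin.succ_pos b) hb.symm)
      rw [card_insert_of_notMem hnot]
      simp only [Fin.castSucc_zero, Fin.succ_zero_eq_one, h01, if_false]
      omega

lemma Fin.val_succAbove {n : ℕ} (u : Fin (n + 1)) (k : Fin n) :
    (u.succAbove k).val = if k.val < u.val then k.val else k.val + 1 := by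
  unfold Fin.succAbove
  split_ifs <;> simp_all [Fin.lt_def]

lemma Fin.succAbove_eq_or_swap_of_dist_eq_one {n : ℕ} {u v : Fin (n + 1)}
    (huv : Nat.dist u.val v.val = 1) (k : Fin n) :
    u.succAbove k = v.succAbove k ∨ (u.succAbove k = v ∧ v.succAbove k = u) := by
  simp only [Fin.ext_iff, Fin.val_succAbove]
  simp only [Nat.dist] at huv
  split_ifs <;> omega

lemma Fin.dist_eq_one_of_succAbove_eq {n : ℕ} {x y z : Fin (n + 1)} {k : Fin n}
    (hxy : x.succAbove k = y) (hzx : z.succAbove k = x) : Nat.dist x.val y.val = 1 := by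
  have hy := Fin.val_succAbove x k
  have hx := Fin.val_succAbove z k
  rw [hxy] at hy
  rw [hzx] at hx
  simp only [Nat.dist]
  split_ifs at hx hy <;> omega

lemma succAbove_del_apply {n : ℕ} (p : Equiv.Perm (Fin (n + 1))) (i : Fin (n + 1))
    (j : Fin n) : (p i).succAbove (del p i j) = p (i.succAbove j) := by
  have hmono : StrictMono ((p ∘ i.succAbove) ∘ Tuple.sort (p ∘ i.succAbove)) :=
    (Tuple.monotone_sort _).strictMono_of_injective
      ((p.injective.comp Fin.succAbove_right_injective).comp (Tuple.sort _).injective)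
  have hrange : Set.range ((p ∘ i.succAbove) ∘ Tuple.sort (p ∘ i.succAbove)) =
      Set.range (p i).succAbove := by
    rw [EquivLike.range_comp, Set.range_comp, Fin.range_succAbove, Fin.range_succAbove,
      Set.image_compl_eq p.bijective, Set.image_singleton]
  have hsort := (hmono.range_inj (Fin.strictMono_succAbove _)).1 hrange
  show (p i).succAbove ((Tuple.sort (p ∘ i.succAbove))⁻¹ j) = p (i.succAbove j)
  simpa using (congrFun hsort ((Tuple.sort (p ∘ i.succAbove))⁻¹ j)).symm

lemma del_eq_del_of_dist_eq_one {n : ℕ} (p : Equiv.Perm (Fin (n + 1))) {a b : Fin (n + 1)}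
    (hab : Nat.dist a.val b.val = 1) (hpab : Nat.dist (p a).val (p b).val = 1) :
    del p a = del p b := by
  ext j : 1
  apply Fin.succAbove_right_injective (p := p b)
  rw [succAbove_del_apply]
  have hk := succAbove_del_apply p a j
  rcases Fin.succAbove_eq_or_swap_of_dist_eq_one hab j with hpos | ⟨hposa, hposb⟩ <;>
  rcases Fin.succAbove_eq_or_swap_of_dist_eq_one hpab (del p a j) with hval | ⟨hval, hval'⟩
  · rw [← hval, hk, hpos]
  · rw [hk, p.apply_eq_iff_eq, hpos] at hval
    exact absurd hval (Fin.succAbove_ne b j)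
  · rw [hk, hposa] at hval
    exact absurd hval.symm (Fin.succAbove_ne _ _)
  · rw [hval', hposb]

lemma dist_eq_one_of_del_eq_del {n : ℕ} (p : Equiv.Perm (Fin (n + 1))) {a : Fin n}
    {b : Fin (n + 1)} (hab : a.castSucc < b) (h : del p a.castSucc = del p b) :
    Nat.dist (p a.castSucc).val (p a.succ).val = 1 := by
  have ha := succAbove_del_apply p a.castSucc a
  have hb := succAbove_del_apply p b a
  rw [Fin.succAbove_castSucc_self] at ha
  rw [Fin.succAbove_of_castSucc_lt _ _ hab, ← h] at hb
  exact Fin.dist_eq_one_of_succAbove_eq ha hb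

theorem stmt1 {n : ℕ} (p : Equiv.Perm (Fin (n + 1))) :
    (D1 p).card = (n + 1) - C p := by
  have hbond (i : Fin n) : del p i.castSucc = del p i.succ ↔
      Nat.dist (p i.castSucc).val (p i.succ).val = 1 :=
    ⟨dist_eq_one_of_del_eq_del p i.castSucc_lt_succ,
      del_eq_del_of_dist_eq_one p (by simp [Nat.dist])⟩
  have hcount := card_image_add_card_adjacent_eq (del p) fun a _ hab h =>
    (hbond a).2 (dist_eq_one_of_del_eq_del p hab h)
  simp only [hbond] at hcount
  rw [D1, C]
  omega
end

section
/- A permutation p of length n has exactly n distinct (n−1)-patterns (the maximum possible) if and only if p contains no bond, i.e., |p_i − p_{i+1}| ≠ 1 for all i ∈ [n−1]. -/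
open Finset

/-! Deleting position `i` lowers the rank of each remaining entry by one exactly when that
entry exceeds `p i`. Deleting either end of a bond therefore gives the same pattern, as the two
values are adjacent. Conversely, if deleting positions `i < j` gives the same pattern, the entry
left at position `i` is `p (i + 1)` in one pattern and `p i` in the other, and equality of their
ranks forces `|p i - p (i + 1)| = 1`. -/

lemma Fin.card_filter_lt {n : ℕ} (a : Fin n) : #{l | l < a} = a := by
  rw [filter_gt_eq_Iio, Fin.card_Iio]

lemma Fin.card_filter_strictMono_lt {n : ℕ} {α : Type*} [Preorder α] [DecidableLT α]
    {g : Fin n → α} (hg : StrictMono g) (a : Fin n) : #{l | g l < g a} = a := by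
  simpa only [hg.lt_iff_lt] using Fin.card_filter_lt a

lemma Tuple.val_sort_inv_apply {n : ℕ} {α : Type*} [LinearOrder α] {f : Fin n → α}
    (hf : Function.Injective f) (k : Fin n) : ((Tuple.sort f)⁻¹ k : ℕ) = #{l | f l < f k} := by
  set σ := Tuple.sort f
  have hmono : StrictMono (f ∘ σ) :=
    (Tuple.monotone_sort f).strictMono_of_injective (hf.comp σ.injective)
  have hreindex : #{l | (f ∘ σ) l < (f ∘ σ) (σ⁻¹ k)} = #{l | f l < f k} := by
    simp only [card_filter, Function.comp_apply, Equiv.Perm.coe_inv, Equiv.apply_symm_apply]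
    exact Equiv.sum_comp σ fun l => if f l < f k then 1 else 0
  rw [← hreindex, Fin.card_filter_strictMono_lt hmono]

lemma Equiv.Perm.card_filter_apply_lt {n : ℕ} (p : Equiv.Perm (Fin n)) (v : Fin n) :
    #{m | p m < v} = v := by
  rw [← Fin.card_filter_lt v, card_filter, card_filter]
  exact Equiv.sum_comp p fun w => if w < v then 1 else 0

lemma Fin.succAbove_castSucc_eq_succAbove_succ {n : ℕ} {a k : Fin n} (hk : k ≠ a) :
    a.castSucc.succAbove k = a.succ.succAbove k := by
  rcases hk.lt_or_gt with hlt | hgt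
  · rw [Fin.succAbove_castSucc_of_lt _ _ hlt, Fin.succAbove_succ_of_le _ _ hlt.le]
  · rw [Fin.succAbove_castSucc_of_le _ _ hgt.le, Fin.succAbove_succ_of_lt _ _ hgt]

lemma val_del_apply_add {n : ℕ} (p : Equiv.Perm (Fin (n + 1))) (i : Fin (n + 1)) (k : Fin n) :
    (del p i k : ℕ) + (if p i < p (i.succAbove k) then 1 else 0) = p (i.succAbove k) := by
  have hf : Function.Injective fun j => p (i.succAbove j) :=
    p.injective.comp Fin.succAbove_right_injective
  have hsplit := Fin.sum_univ_succAbove (fun m => if p m < p (i.succAbove k) then 1 else 0) i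
  simp only [← card_filter, Equiv.Perm.card_filter_apply_lt] at hsplit
  rw [del, Tuple.val_sort_inv_apply hf, hsplit, add_comm]

lemma del_castSucc_eq_del_succ_of_bond {n : ℕ} (p : Equiv.Perm (Fin (n + 1))) (a : Fin n)
    (hbond : Nat.dist (p a.castSucc) (p a.succ) = 1) : del p a.castSucc = del p a.succ := by
  ext k
  have h1 := val_del_apply_add p a.castSucc k
  have h2 := val_del_apply_add p a.succ k
  unfold Nat.dist at hbond
  rcases eq_or_ne k a with rfl | hk
  · rw [Fin.succAbove_castSucc_self] at h1
    rw [Fin.succAbove_succ_self] at h2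
    simp only [Fin.lt_def] at h1 h2
    split_ifs at h1 h2 <;> omega
  · have hsame := Fin.succAbove_castSucc_eq_succAbove_succ hk
    have hne1 : p (a.castSucc.succAbove k) ≠ p a.castSucc := p.injective.ne (Fin.succAbove_ne _ _)
    have hne2 : p (a.castSucc.succAbove k) ≠ p a.succ :=
      p.injective.ne (hsame ▸ Fin.succAbove_ne _ _)
    rw [← hsame] at h2
    simp only [Fin.lt_def, ne_eq, Fin.ext_iff] at h1 h2 hne1 hne2
    split_ifs at h1 h2 <;> omega

lemma exists_bond_of_del_eq {n : ℕ} (p : Equiv.Perm (Fin (n + 1))) {i j : Fin (n + 1)}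
    (hij : i < j) (hd : del p i = del p j) :
    ∃ a : Fin n, Nat.dist (p a.castSucc) (p a.succ) = 1 := by
  obtain ⟨a, rfl⟩ : ∃ a : Fin n, a.castSucc = i :=
    ⟨i.castPred (Fin.ne_last_of_lt hij), Fin.castSucc_castPred _ _⟩
  refine ⟨a, ?_⟩
  have h1 := val_del_apply_add p a.castSucc a
  have h2 := val_del_apply_add p j a
  rw [Fin.succAbove_castSucc_self] at h1
  rw [Fin.succAbove_of_castSucc_lt _ _ hij] at h2
  have heq : (del p a.castSucc a : ℕ) = del p j a := by rw [hd]
  have hne : p a.succ ≠ p a.castSucc := p.injective.ne Fin.castSucc_lt_succ.ne'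
  simp only [Fin.lt_def, ne_eq, Fin.ext_iff] at h1 h2 hne
  unfold Nat.dist
  split_ifs at h1 h2 <;> omega

theorem stmt2 {n : ℕ} (p : Equiv.Perm (Fin (n + 1))) :
    (D1 p).card = n + 1 ↔
      ∀ i : Fin n, Nat.dist (p i.castSucc).val (p i.succ).val ≠ 1 := by
  have hcard : #(univ.image (del p)) = n + 1 ↔ Function.Injective (del p) := by
    simpa only [coe_univ, Set.injOn_univ, card_univ, Fintype.card_fin] using
      card_image_iff (f := del p) (s := univ)
  rw [D1, hcard]
  constructor
  · intro hinj a hbond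
    exact Fin.castSucc_lt_succ.ne (hinj (del_castSucc_eq_del_succ_of_bond p a hbond))
  · intro hno i j hd
    by_contra hne
    obtain ⟨a, hbond⟩ := (Ne.lt_or_gt hne).elim (exists_bond_of_del_eq p · hd)
      (exists_bond_of_del_eq p · hd.symm)
    exact hno a hbond
end

section
/- For any permutation q of length n−1 (with n ≥ 2), the number of permutations of length n that contain q as a pattern is exactly n² − 2n + 2 = (n−1)² + 1. -/
open Finset

/-!
Every `p` containing `q` is `ins q j k` for some position `j` and value `k`, and conversely
`del (ins q j k) j = q`. Two insertion data `(j, k) ≠ (j', k')` give the same permutation only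
when the new entry forms a bond with the entry of `q` to its left and the two trade roles, so
the data whose new entry is not bonded to its left neighbour represent every such `p` exactly
once. Of the `(n + 1)²` data, `2 n` are bonded (two values next to each of the `n` possible
left neighbours), which leaves `n² + 1`.
-/

section Insertion

variable {n : ℕ}

lemma Fin.succAbove_eq_castSucc_or_succ (k : Fin (n + 1)) (a : Fin n) :
    k.succAbove a = a.castSucc ∨ k.succAbove a = a.succ := by
  rw [Fin.succAbove]
  split_ifs <;> simp

lemma Fin.succAbove_castSucc_eq_succAbove_succ_s3 {a b : Fin n} (h : a ≠ b) :
    b.castSucc.succAbove a = b.succ.succAbove a := by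
  rcases h.lt_or_gt with hab | hba
  · rw [Fin.succAbove_castSucc_of_lt _ _ hab, Fin.succAbove_succ_of_le _ _ hab.le]
  · rw [Fin.succAbove_castSucc_of_le _ _ hba.le, Fin.succAbove_succ_of_lt _ _ hba]

@[simp]
lemma ins_apply_self (q : Equiv.Perm (Fin n)) (j k : Fin (n + 1)) : ins q j k j = k := by
  simp [ins]

@[simp]
lemma ins_apply_succAbove (q : Equiv.Perm (Fin n)) (j k : Fin (n + 1)) (m : Fin n) :
    ins q j k (j.succAbove m) = k.succAbove (q m) := by
  simp [ins]

lemma eq_ins_of_apply {q : Equiv.Perm (Fin n)} {p : Equiv.Perm (Fin (n + 1))} {j k : Fin (n + 1)}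
    (hj : p j = k) (hsucc : ∀ m, p (j.succAbove m) = k.succAbove (q m)) : p = ins q j k := by
  ext1 t
  rcases eq_or_ne t j with rfl | ht
  · simp [hj]
  · obtain ⟨m, rfl⟩ := Fin.exists_succAbove_eq ht
    simp [hsucc]

lemma del_ins (q : Equiv.Perm (Fin n)) (j k : Fin (n + 1)) : del (ins q j k) j = q := by
  rw [del, inv_eq_iff_eq_inv, eq_comm, Tuple.eq_sort_iff]
  refine ⟨fun a b hab => ?_, fun a b hab heq => absurd ?_ hab.ne⟩
  · simpa using (Fin.strictMono_succAbove k).monotone hab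
  · simpa using heq

lemma ins_del (p : Equiv.Perm (Fin (n + 1))) (i : Fin (n + 1)) : ins (del p i) i (p i) = p := by
  set f : Fin n → Fin (n + 1) := fun m => p (i.succAbove m)
  set σ := Tuple.sort f
  have hmono : StrictMono (f ∘ σ) :=
    (Tuple.monotone_sort f).strictMono_of_injective
      ((p.injective.comp Fin.succAbove_right_injective).comp σ.injective)
  have hrange : Set.range (f ∘ σ) = Set.range (p i).succAbove := by
    rw [EquivLike.range_comp, Fin.range_succAbove, Set.range_comp', Fin.range_succAbove,
      Set.image_compl_eq p.bijective, Set.image_singleton]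
  -- both are the increasing enumeration of the values other than `p i`
  have hsort : f ∘ σ = (p i).succAbove :=
    (hmono.range_inj (Fin.strictMono_succAbove _)).1 hrange
  refine (eq_ins_of_apply rfl fun m => ?_).symm
  simpa [del, σ] using congrFun hsort (σ⁻¹ m)

/-- Insertion data `(m + 1, k)` for which the new value `k` is adjacent to the value
`q m` just to its left. -/
def bondedPairs (q : Equiv.Perm (Fin n)) : Finset (Fin (n + 1) × Fin (n + 1)) :=
  univ.biUnion fun m => {(m.succ, (q m).castSucc), (m.succ, (q m).succ)}

lemma mem_bondedPairs {q : Equiv.Perm (Fin n)} {j k : Fin (n + 1)} :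
    (j, k) ∈ bondedPairs q ↔ ∃ m, j = m.succ ∧ (k = (q m).castSucc ∨ k = (q m).succ) := by
  simp [bondedPairs, and_or_left]

lemma card_bondedPairs (q : Equiv.Perm (Fin n)) : #(bondedPairs q) = 2 * n := by
  rw [bondedPairs, card_biUnion]
  · simp [Fin.castSucc_lt_succ.ne, mul_comm]
  · intro a _ b _ hab
    simp [Finset.disjoint_left, hab]

/-- Across a bond, the new entry and its left neighbour can trade roles. -/
lemma ins_succ_eq_ins_castSucc (q : Equiv.Perm (Fin n)) (m : Fin n) {k : Fin (n + 1)}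
    (hk : k = (q m).castSucc ∨ k = (q m).succ) :
    ins q m.succ k = ins q m.castSucc (k.succAbove (q m)) := by
  refine eq_ins_of_apply (by rw [← Fin.succAbove_succ_self, ins_apply_succAbove]) fun s => ?_
  rcases eq_or_ne s m with rfl | hs
  · rcases hk with rfl | rfl <;> simp
  · have hqs : q s ≠ q m := q.injective.ne hs
    rw [Fin.succAbove_castSucc_eq_succAbove_succ_s3 hs, ins_apply_succAbove]
    rcases hk with rfl | rfl <;> simp [Fin.succAbove_castSucc_eq_succAbove_succ_s3 hqs]

lemma exists_notMem_bondedPairs_ins_eq (q : Equiv.Perm (Fin n)) (j k : Fin (n + 1)) :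
    ∃ jk ∉ bondedPairs q, ins q jk.1 jk.2 = ins q j k := by
  induction j using Fin.induction generalizing k with
  | zero => exact ⟨(0, k), by simp [mem_bondedPairs, eq_comm], rfl⟩
  | succ m ih =>
    by_cases hk : k = (q m).castSucc ∨ k = (q m).succ
    · obtain ⟨jk, hjk, heq⟩ := ih (k.succAbove (q m))
      exact ⟨jk, hjk, heq.trans (ins_succ_eq_ins_castSucc q m hk).symm⟩
    · refine ⟨(m.succ, k), ?_, rfl⟩
      simpa [mem_bondedPairs] using hk

lemma mem_bondedPairs_of_ins_eq_ins {q : Equiv.Perm (Fin n)} {j k j' k' : Fin (n + 1)}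
    (hlt : j < j') (heq : ins q j k = ins q j' k') : (j', k') ∈ bondedPairs q := by
  obtain ⟨m, rfl⟩ := Fin.exists_succ_eq.2 ((Fin.zero_le j).trans_lt hlt).ne'
  have hj : j.succAbove m = m.succ := Fin.succAbove_of_le_castSucc _ _ (Fin.le_castSucc_iff.2 hlt)
  have hk' : k' = k.succAbove (q m) := by
    rw [← ins_apply_self q m.succ k', ← heq, ← hj, ins_apply_succAbove]
  exact mem_bondedPairs.2 ⟨m, rfl, hk' ▸ Fin.succAbove_eq_castSucc_or_succ k (q m)⟩

lemma ins_injOn_compl_bondedPairs (q : Equiv.Perm (Fin n)) :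
    Set.InjOn (fun jk : Fin (n + 1) × Fin (n + 1) => ins q jk.1 jk.2) ↑(bondedPairs q)ᶜ := by
  rintro ⟨j, k⟩ hjk ⟨j', k'⟩ hjk' (heq : ins q j k = ins q j' k')
  simp only [coe_compl, Set.mem_compl_iff, mem_coe] at hjk hjk'
  rcases lt_trichotomy j j' with hlt | rfl | hgt
  · exact absurd (mem_bondedPairs_of_ins_eq_ins hlt heq) hjk'
  · rw [← ins_apply_self q j k, heq, ins_apply_self]
  · exact absurd (mem_bondedPairs_of_ins_eq_ins hgt heq.symm) hjk

lemma filter_exists_del_eq_image_compl_bondedPairs (q : Equiv.Perm (Fin n)) :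
    (univ.filter fun p : Equiv.Perm (Fin (n + 1)) => ∃ i, del p i = q)
      = (bondedPairs q)ᶜ.image fun jk => ins q jk.1 jk.2 := by
  ext p
  simp only [mem_filter, mem_univ, true_and, mem_image]
  constructor
  · rintro ⟨i, rfl⟩
    obtain ⟨jk, hjk, heq⟩ := exists_notMem_bondedPairs_ins_eq (del p i) i (p i)
    exact ⟨jk, mem_compl.2 hjk, heq.trans (ins_del p i)⟩
  · rintro ⟨⟨j, k⟩, -, rfl⟩
    exact ⟨j, del_ins q j k⟩

end Insertion

theorem stmt3_general {n : ℕ} (q : Equiv.Perm (Fin n)) :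
    (Finset.univ.filter fun p : Equiv.Perm (Fin (n + 1)) => ∃ i, del p i = q).card
      = n ^ 2 + 1 := by
  rw [filter_exists_del_eq_image_compl_bondedPairs,
    card_image_of_injOn (ins_injOn_compl_bondedPairs q), card_compl, card_bondedPairs,
    Fintype.card_prod, Fintype.card_fin]
  have : (n + 1) * (n + 1) = n ^ 2 + 1 + 2 * n := by ring
  omega

theorem stmt3 {n : ℕ} (hn : 1 ≤ n) (q : Equiv.Perm (Fin n)) :
    (Finset.univ.filter fun p : Equiv.Perm (Fin (n + 1)) => ∃ i, del p i = q).card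
      = n ^ 2 + 1 :=
  stmt3_general q
end

section
/- The only permutations p of length n ≥ 2 with exactly one distinct (n−1)-pattern are the increasing permutation 12…n and the decreasing permutation n…21. -/
open Finset

/-!
If every deletion gives the same pattern, then in particular deleting the first and the last
entry does, so `p` compares `p i, p j` exactly as it compares `p (i + 1), p (j + 1)`. Applied to
adjacent positions this forces all ascents `p i < p (i + 1)` to agree, hence `p` is strictly
monotone or strictly antitone, i.e. `12…n` or `n…21`. Conversely every deletion of these two
is again increasing, resp. decreasing.
-/

namespace Equiv.Perm

theorem eq_one_of_strictMono {m : ℕ} {σ : Perm (Fin m)} (hσ : StrictMono σ) :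
    σ = 1 :=
  Equiv.ext fun i => Fin.ext <| Fin.coe_orderIso_apply (hσ.orderIsoOfSurjective σ σ.surjective) i

theorem eq_of_lt_iff_lt {m : ℕ} {σ τ : Perm (Fin m)}
    (h : ∀ j k, σ j < σ k ↔ τ j < τ k) : σ = τ := by
  have hmono : StrictMono (σ * τ⁻¹) := fun a b hab => by
    simpa only [Equiv.Perm.mul_apply, h, Equiv.Perm.coe_inv, Equiv.apply_symm_apply] using hab
  exact mul_inv_eq_one.mp (eq_one_of_strictMono hmono)

theorem eq_revPerm_of_strictAnti {m : ℕ} {σ : Perm (Fin m)}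
    (hσ : StrictAnti σ) : σ = Fin.revPerm :=
  eq_of_lt_iff_lt fun j k => by
    rw [hσ.lt_iff_gt, Fin.revPerm_apply, Fin.revPerm_apply, Fin.rev_lt_rev]

end Equiv.Perm

theorem Fin.iff_of_iff_of_val_succ {m : ℕ} {P : Fin m → Prop}
    (h : ∀ i j : Fin m, j.val = i.val + 1 → (P i ↔ P j)) (i j : Fin m) : P i ↔ P j := by
  cases m with
  | zero => exact i.elim0
  | succ m =>
    have h0 : ∀ i : Fin (m + 1), P i ↔ P 0 := fun i => by
      induction i using Fin.induction with
      | zero => rfl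
      | succ i ih => exact (h i.castSucc i.succ (by simp)).symm.trans ih
    exact (h0 i).trans (h0 j).symm

theorem del_lt_del_iff {n : ℕ} (p : Equiv.Perm (Fin (n + 1))) (i : Fin (n + 1)) (j k : Fin n) :
    del p i j < del p i k ↔ p (i.succAbove j) < p (i.succAbove k) := by
  set f : Fin n → Fin (n + 1) := fun j => p (i.succAbove j)
  have hf : Function.Injective f := p.injective.comp Fin.succAbove_right_injective
  have hsort : StrictMono (f ∘ Tuple.sort f) :=
    (Tuple.monotone_sort f).strictMono_of_injective (hf.comp (Tuple.sort f).injective)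
  show (Tuple.sort f)⁻¹ j < (Tuple.sort f)⁻¹ k ↔ f j < f k
  rw [← hsort.lt_iff_lt]
  simp only [Function.comp_apply, Equiv.Perm.coe_inv, Equiv.apply_symm_apply]

theorem del_eq_of_lt_iff_lt {n : ℕ} {p : Equiv.Perm (Fin (n + 1))} {i : Fin (n + 1)}
    {q : Equiv.Perm (Fin n)} (h : ∀ j k, q j < q k ↔ p (i.succAbove j) < p (i.succAbove k)) :
    del p i = q :=
  Equiv.Perm.eq_of_lt_iff_lt fun j k => (del_lt_del_iff p i j k).trans (h j k).symm

theorem del_one {n : ℕ} (i : Fin (n + 1)) : del 1 i = 1 :=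
  del_eq_of_lt_iff_lt fun _ _ => by
    simp only [Equiv.Perm.one_apply, Fin.succAbove_lt_succAbove_iff]

theorem del_revPerm {n : ℕ} (i : Fin (n + 1)) : del Fin.revPerm i = Fin.revPerm :=
  del_eq_of_lt_iff_lt fun _ _ => by
    simp only [Fin.revPerm_apply, Fin.rev_lt_rev, Fin.succAbove_lt_succAbove_iff]

theorem card_D1_eq_one_iff {n : ℕ} (p : Equiv.Perm (Fin (n + 1))) :
    (D1 p).card = 1 ↔ ∀ i, del p i = del p 0 := by
  constructor
  · intro h i
    obtain ⟨c, hc⟩ := card_eq_one.mp h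
    have hdel : ∀ j, del p j = c := fun j => by
      have hj : del p j ∈ D1 p := mem_image_of_mem _ (mem_univ j)
      rwa [hc, mem_singleton] at hj
    rw [hdel, hdel]
  · intro h
    rw [D1, image_congr fun i _ => h i, image_const univ_nonempty,
      card_singleton]

theorem lt_iff_succ_lt_succ_of_del_last_eq_del_zero {n : ℕ} {p : Equiv.Perm (Fin (n + 1))}
    (h : del p (Fin.last n) = del p 0) (j k : Fin n) :
    p j.castSucc < p k.castSucc ↔ p j.succ < p k.succ := by
  have hlast := del_lt_del_iff p (Fin.last n) j k
  have hzero := del_lt_del_iff p 0 j k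
  rw [h, Fin.succAbove_last] at hlast
  rw [Fin.succAbove_zero] at hzero
  exact hlast.symm.trans hzero

theorem strictMono_or_strictAnti_of_lt_iff_succ_lt_succ {n : ℕ} {α : Type*} [LinearOrder α]
    {f : Fin (n + 1) → α} (hf : Function.Injective f)
    (h : ∀ j k : Fin n, f j.castSucc < f k.castSucc ↔ f j.succ < f k.succ) :
    StrictMono f ∨ StrictAnti f := by
  have hasc : ∀ i i' : Fin n, f i.castSucc < f i.succ ↔ f i'.castSucc < f i'.succ := by
    refine Fin.iff_of_iff_of_val_succ fun i i' hi' => ?_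
    have : i'.castSucc = i.succ := Fin.ext (by simp [hi'])
    simpa only [this] using h i i'
  by_cases hmono : ∀ i : Fin n, f i.castSucc < f i.succ
  · exact Or.inl (Fin.strictMono_iff_lt_succ.mpr hmono)
  · obtain ⟨i₀, hi₀⟩ := not_forall.mp hmono
    refine Or.inr (Fin.strictAnti_iff_succ_lt.mpr fun i => ?_)
    have hle : f i.succ ≤ f i.castSucc := not_lt.mp fun hi => hi₀ ((hasc i i₀).mp hi)
    exact hle.lt_of_ne (hf.ne Fin.castSucc_lt_succ.ne')

theorem stmt4_general {n : ℕ} (p : Equiv.Perm (Fin (n + 1))) :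
    (D1 p).card = 1 ↔ p = Equiv.refl (Fin (n + 1)) ∨ p = Fin.revPerm := by
  rw [card_D1_eq_one_iff]
  constructor
  · intro h
    rcases strictMono_or_strictAnti_of_lt_iff_succ_lt_succ p.injective
        (lt_iff_succ_lt_succ_of_del_last_eq_del_zero (h _)) with hmono | hanti
    · exact Or.inl (Equiv.Perm.eq_one_of_strictMono hmono)
    · exact Or.inr (Equiv.Perm.eq_revPerm_of_strictAnti hanti)
  · rintro (rfl | rfl) i
    · exact (del_one i).trans (del_one 0).symm
    · rw [del_revPerm, del_revPerm]

theorem stmt4 {n : ℕ} (hn : 1 ≤ n) (p : Equiv.Perm (Fin (n + 1))) :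
    (D1 p).card = 1 ↔ p = Equiv.refl (Fin (n + 1)) ∨ p = Fin.revPerm :=
  stmt4_general p
end

section
/- The sum over all permutations p of length n (n ≥ 2) of C(p)·(C(p)−1), where C(p) is the number of bonds of p, equals 4·(n−2)!·(n−2)². -/
open Finset

/-!
`C p * (C p - 1)` counts ordered pairs `(i, j)` of distinct bond positions, so the sum is
`∑_{i ≠ j} #{p | p has bonds at i and j}`. Such a count only depends on the values `p` takes at
the three or four positions involved: it is the number of admissible value tuples times the
factorial of the number of remaining positions. For adjacent positions `j = i + 1` the three
values form a monotone run of consecutive integers (`2n` choices, `(n - 1)!` completions); for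
`|i - j| ≥ 2` they form two disjoint value dominoes, i.e. an ordered pair of edges of the value
path at distance `≥ 2` with two orientations (`4 n (n - 1)` choices, `(n - 2)!` completions).
There are `2n` adjacent and `n (n - 1)` far ordered pairs of positions, and
`(2n)² (n - 1)! + 4 (n (n - 1))² (n - 2)! = 4 n² n!`.
-/

open Function Equiv
open scoped Nat

section PermExtension

variable {α ι : Type*} [Fintype α] [DecidableEq α] [Fintype ι]

theorem card_perm_extending {t v : ι → α} (ht : Injective t) (hv : Injective v) :
    Fintype.card {σ : Perm α // ∀ x, σ (t x) = v x} =
      (Fintype.card α - Fintype.card ι)! := by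
  let e : Set.range t ≃ Set.range v := (ofInjective t ht).symm.trans (ofInjective v hv)
  have hext : {σ : Perm α // ∀ x, σ (t x) = v x} ≃
      (((Set.range t)ᶜ : Set α) ≃ ((Set.range v)ᶜ : Set α)) := by
    refine (subtypeEquivRight fun σ => ?_).trans (Equiv.Set.compl e)
    constructor
    · rintro h ⟨_, x, rfl⟩
      simp [e, h x]
    · intro h x
      simpa [e] using h ⟨t x, x, rfl⟩
  have hcompl {f : ι → α} (hf : Injective f) :
      Fintype.card ((Set.range f)ᶜ : Set α) = Fintype.card α - Fintype.card ι := by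
    rw [Fintype.card_compl_set, Set.card_range_of_injective hf]
  rw [Fintype.card_congr hext, Fintype.card_equiv (Fintype.equivOfCardEq
    ((hcompl ht).trans (hcompl hv).symm)), hcompl ht]

theorem card_filter_perm_comp [DecidableEq ι] {t : ι → α} (ht : Injective t)
    (Q : (ι → α) → Prop) [DecidablePred Q] :
    #(univ.filter fun σ : Perm α => Q (σ ∘ t)) =
      #(univ.filter fun f : ι → α => Injective f ∧ Q f) *
        (Fintype.card α - Fintype.card ι)! := by
  rw [card_eq_sum_card_fiberwise (f := fun σ : Perm α => σ ∘ t)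
    (t := univ.filter fun f : ι → α => Injective f ∧ Q f) fun σ hσ => by
      simp only [coe_filter, mem_univ, true_and] at hσ ⊢
      exact ⟨σ.injective.comp ht, hσ⟩]
  refine (sum_congr rfl fun f hf => ?_).trans (sum_const_nat fun _ _ => rfl)
  obtain ⟨hfi, hfQ⟩ := (mem_filter.mp hf).2
  rw [← card_perm_extending ht hfi, Fintype.card_subtype, filter_filter]
  congr 1
  ext σ
  simp only [mem_filter, mem_univ, true_and, funext_iff, comp_apply]
  constructor
  · exact And.right
  · intro h
    refine ⟨?_, h⟩
    convert hfQ using 1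
    exact funext h

end PermExtension

def adjPairs (m : ℕ) : Finset (Fin m × Fin m) := univ.filter fun z => Nat.dist z.1 z.2 = 1

def farPairs (m : ℕ) : Finset (Fin m × Fin m) := univ.filter fun z => 2 ≤ Nat.dist z.1 z.2

theorem offDiag_univ_eq_adjPairs_union_farPairs (m : ℕ) :
    (univ : Finset (Fin m)).offDiag = adjPairs m ∪ farPairs m := by
  ext ⟨a, b⟩
  simp only [mem_offDiag, mem_univ, true_and, adjPairs, farPairs, mem_union, Finset.mem_filter,
    ne_eq, Fin.ext_iff]
  simp only [Nat.dist]
  omega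

theorem disjoint_adjPairs_farPairs (m : ℕ) : Disjoint (adjPairs m) (farPairs m) :=
  disjoint_filter.mpr fun _ _ h => by omega

def adjPairOfEdge (n : ℕ) (z : Fin n × Bool) : Fin (n + 1) × Fin (n + 1) :=
  if z.2 then (z.1.castSucc, z.1.succ) else (z.1.succ, z.1.castSucc)

theorem adjPairs_eq_image_adjPairOfEdge (n : ℕ) :
    adjPairs (n + 1) = univ.image (adjPairOfEdge n) := by
  ext ⟨a, b⟩
  simp only [adjPairs, Finset.mem_filter, mem_univ, true_and, mem_image, Prod.exists,
    adjPairOfEdge]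
  simp only [Nat.dist]
  constructor
  · intro h
    rcases lt_or_ge a b with hab | hab
    · exact ⟨⟨a, by omega⟩, true, by simp [Prod.ext_iff, Fin.ext_iff]; omega⟩
    · exact ⟨⟨b, by omega⟩, false, by simp [Prod.ext_iff, Fin.ext_iff]; omega⟩
  · rintro ⟨k, (_ | _), h⟩ <;> simp [Prod.ext_iff, Fin.ext_iff] at h <;> omega

theorem adjPairOfEdge_injective (n : ℕ) : Injective (adjPairOfEdge n) := by
  rintro ⟨k, (_ | _)⟩ ⟨l, (_ | _)⟩ h <;>
    simp [adjPairOfEdge, Prod.ext_iff, Fin.ext_iff] at h ⊢ <;> omega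

theorem card_adjPairs (n : ℕ) : #(adjPairs (n + 1)) = 2 * n := by
  rw [adjPairs_eq_image_adjPairOfEdge, card_image_of_injective _ (adjPairOfEdge_injective n),
    card_univ, Fintype.card_prod, Fintype.card_fin, Fintype.card_bool, mul_comm]

theorem card_farPairs (n : ℕ) : #(farPairs (n + 1)) = n * (n - 1) := by
  have h := card_union_of_disjoint (disjoint_adjPairs_farPairs (n + 1))
  rw [← offDiag_univ_eq_adjPairs_union_farPairs, offDiag_card, card_univ, Fintype.card_fin,
    card_adjPairs] at h
  have hsq : (n + 1) * (n + 1) - (n + 1) = 2 * n + n * (n - 1) := by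
    cases n
    · rfl
    · simp only [Nat.add_sub_cancel]; ring_nf; omega
  omega

def IsRun {m : ℕ} (f : Fin 3 → Fin m) : Prop :=
  Nat.dist (f 0) (f 1) = 1 ∧ Nat.dist (f 1) (f 2) = 1

instance {m : ℕ} : DecidablePred (IsRun (m := m)) := fun _ => instDecidableAnd

def monotoneRun (n : ℕ) (z : Fin n × Bool) : Fin 3 → Fin (n + 2) :=
  if z.2 then ![⟨z.1, by omega⟩, ⟨z.1 + 1, by omega⟩, ⟨z.1 + 2, by omega⟩]
  else ![⟨z.1 + 2, by omega⟩, ⟨z.1 + 1, by omega⟩, ⟨z.1, by omega⟩]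

theorem card_runs (n : ℕ) :
    #(univ.filter fun f : Fin 3 → Fin (n + 2) => Injective f ∧ IsRun f) = 2 * n := by
  have himage : (univ.filter fun f : Fin 3 → Fin (n + 2) => Injective f ∧ IsRun f) =
      univ.image (monotoneRun n) := by
    ext f
    simp only [Finset.mem_filter, mem_univ, true_and, mem_image, Prod.exists]
    constructor
    · rintro ⟨hf, h01, h12⟩
      have h02 : (f 0 : ℕ) ≠ f 2 := fun h => absurd (hf (Fin.ext h)) (by decide)
      simp only [Nat.dist] at h01 h12
      rcases lt_or_ge (f 0 : ℕ) (f 1) with h | h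
      · refine ⟨⟨f 0, by omega⟩, true, funext fun i => ?_⟩
        fin_cases i <;> simp [monotoneRun, Fin.ext_iff] <;> omega
      · refine ⟨⟨f 2, by omega⟩, false, funext fun i => ?_⟩
        fin_cases i <;> simp [monotoneRun, Fin.ext_iff] <;> omega
    · rintro ⟨k, b, rfl⟩
      refine ⟨fun i j h => ?_, ?_⟩
      · fin_cases i <;> fin_cases j <;> cases b <;> simp_all [monotoneRun, Fin.ext_iff]
      · cases b <;> simp [IsRun, monotoneRun, Nat.dist]
  rw [himage, card_image_of_injective, card_univ, Fintype.card_prod, Fintype.card_fin,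
    Fintype.card_bool, mul_comm]
  rintro ⟨k, (_ | _)⟩ ⟨l, (_ | _)⟩ h <;>
    simp [monotoneRun, funext_iff, Fin.forall_fin_succ, Fin.ext_iff] at h ⊢ <;> omega

def IsDominoPair {m : ℕ} (f : Fin 4 → Fin m) : Prop :=
  Nat.dist (f 0) (f 1) = 1 ∧ Nat.dist (f 2) (f 3) = 1

instance {m : ℕ} : DecidablePred (IsDominoPair (m := m)) := fun _ => instDecidableAnd

def dominoPair (n : ℕ) (z : (Fin (n + 1) × Fin (n + 1)) × Bool × Bool) :
    Fin 4 → Fin (n + 2) :=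
  ![(adjPairOfEdge (n + 1) (z.1.1, z.2.1)).1, (adjPairOfEdge (n + 1) (z.1.1, z.2.1)).2,
    (adjPairOfEdge (n + 1) (z.1.2, z.2.2)).1, (adjPairOfEdge (n + 1) (z.1.2, z.2.2)).2]

theorem exists_adjPairOfEdge_eq {n : ℕ} {a b : Fin (n + 2)} (h : Nat.dist a b = 1) :
    ∃ e, adjPairOfEdge (n + 1) e = (a, b) := by
  have hab : (a, b) ∈ adjPairs (n + 2) := Finset.mem_filter.mpr ⟨mem_univ _, h⟩
  simpa [adjPairs_eq_image_adjPairOfEdge] using hab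

theorem card_dominoPairs (n : ℕ) :
    #(univ.filter fun f : Fin 4 → Fin (n + 2) => Injective f ∧ IsDominoPair f) =
      4 * #(farPairs (n + 1)) := by
  have himage : (univ.filter fun f : Fin 4 → Fin (n + 2) => Injective f ∧ IsDominoPair f) =
      (farPairs (n + 1) ×ˢ univ).image (dominoPair n) := by
    ext f
    simp only [Finset.mem_filter, mem_univ, true_and, mem_image, Prod.exists, mem_product,
      farPairs, and_true]
    constructor
    · rintro ⟨hf, h01, h23⟩
      obtain ⟨⟨u, b⟩, hu⟩ := exists_adjPairOfEdge_eq h01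
      obtain ⟨⟨w, c⟩, hw⟩ := exists_adjPairOfEdge_eq h23
      refine ⟨u, w, b, c, ?_, funext fun i => ?_⟩
      · -- two dominoes are disjoint exactly when their lower ends are at distance `≥ 2`
        have hne : ∀ i j : Fin 4, i ≠ j → (f i : ℕ) ≠ f j :=
          fun i j hij h => hij (hf (Fin.ext h))
        have h02 := hne 0 2 (by decide)
        have h03 := hne 0 3 (by decide)
        have h12 := hne 1 2 (by decide)
        have h13 := hne 1 3 (by decide)
        simp only [Nat.dist]
        cases b <;> cases c <;> simp [adjPairOfEdge, Prod.ext_iff, Fin.ext_iff] at hu hw <;> omega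
      · fin_cases i <;> simp [dominoPair, hu, hw]
    · rintro ⟨u, w, b, c, hfar, rfl⟩
      simp only [Nat.dist] at hfar
      refine ⟨fun i j h => ?_, ?_⟩
      · fin_cases i <;> fin_cases j <;> cases b <;> cases c <;>
          simp_all [dominoPair, adjPairOfEdge, Fin.ext_iff] <;> omega
      · cases b <;> cases c <;> simp [IsDominoPair, dominoPair, adjPairOfEdge, Nat.dist]
  rw [himage, card_image_of_injective, card_product, card_univ, Fintype.card_prod,
    Fintype.card_bool, mul_comm]
  rintro ⟨⟨u, w⟩, b, c⟩ ⟨⟨u', w'⟩, b', c'⟩ h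
  have hu := adjPairOfEdge_injective _ (Prod.ext (congrFun h 0) (congrFun h 1))
  have hw := adjPairOfEdge_injective _ (Prod.ext (congrFun h 2) (congrFun h 3))
  simp_all

section Bonds

variable {n : ℕ}

def bonds (p : Perm (Fin (n + 1))) : Finset (Fin n) :=
  univ.filter fun i => Nat.dist (p i.castSucc) (p i.succ) = 1

theorem C_mul_C_sub_one (p : Perm (Fin (n + 1))) : C p * (C p - 1) = #(bonds p).offDiag := by
  rw [offDiag_card, ← Nat.mul_sub_one]
  rfl

def withBondsAt (i j : Fin (n + 1)) : Finset (Perm (Fin (n + 2))) :=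
  univ.filter fun p => i ∈ bonds p ∧ j ∈ bonds p

theorem withBondsAt_comm (i j : Fin (n + 1)) : withBondsAt i j = withBondsAt j i :=
  filter_congr fun _ _ => and_comm

theorem sum_card_offDiag_bonds :
    ∑ p : Perm (Fin (n + 2)), #(bonds p).offDiag =
      ∑ z ∈ (univ : Finset (Fin (n + 1))).offDiag, #(withBondsAt z.1 z.2) := by
  convert sum_card_bipartiteAbove_eq_sum_card_bipartiteBelow
    (r := fun (p : Perm (Fin (n + 2))) (z : Fin (n + 1) × Fin (n + 1)) =>
      z.1 ∈ bonds p ∧ z.2 ∈ bonds p) with p _ z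
  · ext z
    simp only [bipartiteAbove, Finset.mem_filter, mem_offDiag, mem_univ, true_and]
    tauto
  · rfl

theorem card_withBondsAt_of_val_eq_succ {i j : Fin (n + 1)} (hij : (j : ℕ) = i + 1) :
    #(withBondsAt i j) = 2 * n * (n - 1)! := by
  have ht : Injective ![i.castSucc, i.succ, j.succ] := by
    intro x y h
    fin_cases x <;> fin_cases y <;> simp [Fin.ext_iff] at h ⊢ <;> omega
  have hcast : j.castSucc = i.succ := Fin.ext (by simp [hij])
  have hfilter : withBondsAt i j = univ.filter fun p : Perm (Fin (n + 2)) =>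
      IsRun (p ∘ ![i.castSucc, i.succ, j.succ]) :=
    filter_congr fun p _ => by simp [bonds, IsRun, hcast]
  rw [hfilter, card_filter_perm_comp ht, card_runs, Fintype.card_fin, Fintype.card_fin]
  rfl

theorem card_withBondsAt_of_val_add_two_le {i j : Fin (n + 1)} (hij : (i : ℕ) + 2 ≤ j) :
    #(withBondsAt i j) = 4 * #(farPairs (n + 1)) * (n - 2)! := by
  have ht : Injective ![i.castSucc, i.succ, j.castSucc, j.succ] := by
    intro x y h
    fin_cases x <;> fin_cases y <;> simp [Fin.ext_iff] at h ⊢ <;> omega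
  have hfilter : withBondsAt i j = univ.filter fun p : Perm (Fin (n + 2)) =>
      IsDominoPair (p ∘ ![i.castSucc, i.succ, j.castSucc, j.succ]) :=
    filter_congr fun p _ => by simp [bonds, IsDominoPair]
  rw [hfilter, card_filter_perm_comp ht, card_dominoPairs, Fintype.card_fin, Fintype.card_fin]
  rfl

theorem card_withBondsAt_of_mem_adjPairs {z : Fin (n + 1) × Fin (n + 1)}
    (hz : z ∈ adjPairs (n + 1)) : #(withBondsAt z.1 z.2) = 2 * n * (n - 1)! := by
  have hdist : Nat.dist z.1 z.2 = 1 := (Finset.mem_filter.mp hz).2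
  simp only [Nat.dist] at hdist
  rcases lt_or_ge z.1 z.2 with h | h
  · exact card_withBondsAt_of_val_eq_succ (by omega)
  · rw [withBondsAt_comm]
    exact card_withBondsAt_of_val_eq_succ (by omega)

theorem card_withBondsAt_of_mem_farPairs {z : Fin (n + 1) × Fin (n + 1)}
    (hz : z ∈ farPairs (n + 1)) :
    #(withBondsAt z.1 z.2) = 4 * #(farPairs (n + 1)) * (n - 2)! := by
  have hdist : 2 ≤ Nat.dist z.1 z.2 := (Finset.mem_filter.mp hz).2
  simp only [Nat.dist] at hdist
  rcases lt_or_ge z.1 z.2 with h | h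
  · exact card_withBondsAt_of_val_add_two_le (by omega)
  · rw [withBondsAt_comm]
    exact card_withBondsAt_of_val_add_two_le (by omega)

end Bonds

theorem adj_far_count_identity (n : ℕ) :
    2 * n * (2 * n * (n - 1)!) + n * (n - 1) * (4 * (n * (n - 1)) * (n - 2)!) =
      4 * n ! * n ^ 2 := by
  rcases n with _ | _ | k
  · rfl
  · rfl
  · simp only [Nat.add_sub_cancel, show k + 2 - 2 = k from rfl, Nat.factorial_succ]
    ring

theorem stmt7 (n : ℕ) :
    ∑ p : Equiv.Perm (Fin (n + 2)), C p * (C p - 1)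
      = 4 * Nat.factorial n * n ^ 2 := by
  calc ∑ p : Perm (Fin (n + 2)), C p * (C p - 1)
      = ∑ p : Perm (Fin (n + 2)), #(bonds p).offDiag :=
        sum_congr rfl fun p _ => C_mul_C_sub_one p
    _ = ∑ z ∈ (univ : Finset (Fin (n + 1))).offDiag, #(withBondsAt z.1 z.2) :=
        sum_card_offDiag_bonds
    _ = ∑ z ∈ adjPairs (n + 1), #(withBondsAt z.1 z.2) +
          ∑ z ∈ farPairs (n + 1), #(withBondsAt z.1 z.2) := by
        rw [offDiag_univ_eq_adjPairs_union_farPairs, sum_union (disjoint_adjPairs_farPairs _)]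
    _ = #(adjPairs (n + 1)) * (2 * n * (n - 1)!) +
          #(farPairs (n + 1)) * (4 * #(farPairs (n + 1)) * (n - 2)!) := by
        rw [sum_const_nat fun _ => card_withBondsAt_of_mem_adjPairs,
          sum_const_nat fun _ => card_withBondsAt_of_mem_farPairs]
    _ = 4 * n ! * n ^ 2 := by
        rw [card_adjPairs, card_farPairs, adj_far_count_identity]
end

section
/- The variance of the number of bonds in a uniformly random permutation of length n (n ≥ 2) equals 4(n−2)²/(n(n−1)) + 2(n−1)/n − 4(n−1)²/n². -/
open Finset

/-!
Counting bonds position by position, `∑ p, C p` and `∑ p, C p ^ 2` are sums, over one position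
`i` or a pair of positions `(i, j)`, of the number of permutations with bonds there. Restricting
a permutation of `Fin N` to `k` fixed positions hits every injective `k`-tuple of values exactly
`(N - k)!` times, so these numbers are `(N - k)!` times a count of value tuples: `2 (N - 1)`
adjacent pairs when `i = j`, `2 (N - 2)` monotone runs of three values when `i, j` are
neighbours, and `4 (N - 2) (N - 3)` ordered pairs of disjoint adjacent pairs otherwise (two such
pairs are disjoint iff their smaller entries differ by at least `2`). With `N = n + 2` this gives
`∑ C = 2 (n + 1)² n!` and `∑ C² = (2 (n + 1)² + 4 n²) n!`.
-/

open Equiv Function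
open scoped Nat

section PermutationPatterns

variable {α β : Type*} [Fintype α] [DecidableEq α] [Fintype β]

theorem card_filter_perm_smul_embedding_eq (e f : β ↪ α) :
    #{p : Perm α | p • e = f} = (Fintype.card α - Fintype.card β)! := by
  -- The action on embeddings is transitive, so all fibres of `p ↦ p • e` are translates of one.
  have hfiber : ∀ g : β ↪ α, #{p : Perm α | p • e = g} = #{p : Perm α | p • e = e} := by
    intro g
    obtain ⟨σ, rfl⟩ := Perm.exists_smul_eq_embedding e g
    refine card_nbij' (σ⁻¹ * ·) (σ * ·) ?_ ?_ ?_ ?_ <;> intro p hp <;> simp_all [mul_smul]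
  have hle := Fintype.card_le_of_embedding e
  have htotal : (Fintype.card α)! =
      (Fintype.card α).descFactorial (Fintype.card β) * #{p : Perm α | p • e = e} := by
    rw [← Fintype.card_perm, ← Fintype.card_embedding_eq, ← Finset.card_univ,
      card_eq_sum_card_fiberwise (f := (· • e)) (t := univ) (by simp)]
    simp [hfiber]
  rw [hfiber f]
  rw [← Nat.factorial_mul_descFactorial hle, mul_comm] at htotal
  exact (Nat.eq_of_mul_eq_mul_left (Nat.descFactorial_pos.2 hle) htotal).symm

theorem card_filter_perm_comp_embedding [DecidableEq β] (e : β ↪ α) (Q : (β → α) → Prop)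
    [DecidablePred Q] :
    #{p : Perm α | Q (p ∘ e)}
      = (Fintype.card α - Fintype.card β)! * #{f : β → α | Injective f ∧ Q f} := by
  rw [card_eq_sum_card_fiberwise (f := fun p : Perm α => ⇑p ∘ ⇑e)
    (t := {f | Injective f ∧ Q f}) (fun p hp => by
      simp only [coe_filter, mem_univ, true_and, Set.mem_ofPred_eq] at hp ⊢
      exact ⟨p.injective.comp e.injective, hp⟩),
    mul_comm, ← smul_eq_mul, ← sum_const]
  refine sum_congr rfl fun f hf => ?_
  simp only [mem_filter, mem_univ, true_and] at hf
  rw [← card_filter_perm_smul_embedding_eq e ⟨f, hf.1⟩, filter_filter]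
  congr 1
  ext p
  simp only [mem_filter, mem_univ, true_and, Embedding.ext_iff, Embedding.smul_apply,
    Perm.smul_def, Embedding.coeFn_mk, ← funext_iff]
  constructor
  · exact And.right
  · rintro rfl
    exact ⟨hf.2, rfl⟩

end PermutationPatterns

section AdjacentValues

variable {m : ℕ}

def dart (u : Fin m × Bool) : Fin (m + 1) × Fin (m + 1) :=
  if u.2 then (u.1.castSucc, u.1.succ) else (u.1.succ, u.1.castSucc)

lemma dart_val (u : Fin m × Bool) :
    ((dart u).1 : ℕ) = u.1 ∧ ((dart u).2 : ℕ) = u.1 + 1 ∨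
      ((dart u).1 : ℕ) = u.1 + 1 ∧ ((dart u).2 : ℕ) = u.1 := by
  rcases u with ⟨l, _ | _⟩ <;> simp [dart]

lemma dart_injective : Injective (dart (m := m)) := by
  rintro ⟨l, _ | _⟩ ⟨l', _ | _⟩ h <;> simp_all [dart, Fin.ext_iff] <;> omega

lemma exists_dart_eq_iff {a b : Fin (m + 1)} : (∃ u, dart u = (a, b)) ↔ Nat.dist a b = 1 := by
  constructor
  · rintro ⟨u, hu⟩
    have := dart_val u
    simp only [hu] at this
    unfold Nat.dist
    omega
  · intro h
    unfold Nat.dist at h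
    rcases (by omega : (a : ℕ) + 1 = b ∨ (b : ℕ) + 1 = a) with h | h
    · exact ⟨(⟨a, by omega⟩, true), by simp [dart, h]⟩
    · exact ⟨(⟨b, by omega⟩, false), by simp [dart, h]⟩

lemma card_dist_eq_one :
    #{x : Fin (m + 1) × Fin (m + 1) | Nat.dist x.1 x.2 = 1} = 2 * m := by
  have himage : ({x : Fin (m + 1) × Fin (m + 1) | Nat.dist x.1 x.2 = 1} : Finset _)
      = univ.image dart := by
    ext ⟨a, b⟩
    simp only [mem_filter, mem_univ, true_and, mem_image]
    exact exists_dart_eq_iff.symm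
  rw [himage, card_image_of_injective _ dart_injective]
  simp [mul_comm]

lemma card_two_le_dist :
    #{x : Fin (m + 1) × Fin (m + 1) | 2 ≤ Nat.dist x.1 x.2} = m * m - m := by
  have hcompl : ({x : Fin (m + 1) × Fin (m + 1) | ¬ 2 ≤ Nat.dist x.1 x.2} : Finset _)
      = univ.diag ∪ ({x : Fin (m + 1) × Fin (m + 1) | Nat.dist x.1 x.2 = 1} : Finset _) := by
    ext x
    simp only [mem_filter, mem_univ, true_and, mem_union, mem_diag, Fin.ext_iff]
    unfold Nat.dist
    omega
  have hdisj : Disjoint (univ.diag : Finset (Fin (m + 1) × Fin (m + 1)))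
      ({x : Fin (m + 1) × Fin (m + 1) | Nat.dist x.1 x.2 = 1} : Finset _) := by
    rw [disjoint_left]
    rintro x hx
    simp only [mem_diag] at hx
    simp [hx.2]
  have htotal := card_filter_add_card_filter_not (s := univ)
    (fun x : Fin (m + 1) × Fin (m + 1) => 2 ≤ Nat.dist x.1 x.2)
  rw [hcompl, card_union_of_disjoint hdisj, diag_card, card_dist_eq_one] at htotal
  simp only [card_univ, Fintype.card_prod, Fintype.card_fin] at htotal
  have : (m + 1) * (m + 1) = m * m + 2 * m + 1 := by ring
  omega

lemma card_injective_fin_two_dist_eq_one :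
    #{f : Fin 2 → Fin (m + 1) | Injective f ∧ Nat.dist (f 0) (f 1) = 1} = 2 * m := by
  rw [← card_dist_eq_one]
  refine card_equiv (finTwoArrowEquiv _) fun f => ?_
  simp only [mem_filter, mem_univ, true_and]
  refine and_iff_right_of_imp fun h i j hij => ?_
  fin_cases i <;> fin_cases j <;> simp_all

def path3 (u : Fin m × Bool) : Fin 3 → Fin (m + 2) :=
  if u.2 then ![u.1.castSucc.castSucc, u.1.succ.castSucc, u.1.succ.succ]
  else ![u.1.succ.succ, u.1.succ.castSucc, u.1.castSucc.castSucc]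

lemma path3_val (u : Fin m × Bool) :
    (path3 u 0 : ℕ) = u.1 ∧ (path3 u 1 : ℕ) = u.1 + 1 ∧ (path3 u 2 : ℕ) = u.1 + 2 ∨
      (path3 u 0 : ℕ) = u.1 + 2 ∧ (path3 u 1 : ℕ) = u.1 + 1 ∧ (path3 u 2 : ℕ) = u.1 := by
  rcases u with ⟨l, _ | _⟩ <;> simp [path3]

lemma path3_injective : Injective (path3 (m := m)) := by
  rintro ⟨l, _ | _⟩ ⟨l', _ | _⟩ h <;>
    have h0 := congrArg Fin.val (congrFun h 0) <;> have h2 := congrArg Fin.val (congrFun h 2) <;>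
    simp_all [path3, Fin.ext_iff] <;> omega

lemma card_injective_fin_three_dist_eq_one :
    #{f : Fin 3 → Fin (m + 2) |
      Injective f ∧ Nat.dist (f 0) (f 1) = 1 ∧ Nat.dist (f 1) (f 2) = 1} = 2 * m := by
  have himage : ({f : Fin 3 → Fin (m + 2) | Injective f ∧ Nat.dist (f 0) (f 1) = 1 ∧
      Nat.dist (f 1) (f 2) = 1} : Finset _) = univ.image path3 := by
    ext f
    simp only [mem_filter, mem_univ, true_and, mem_image]
    constructor
    · rintro ⟨hf, h01, h12⟩
      have h02 := Fin.val_ne_of_ne (hf.ne (show (0 : Fin 3) ≠ 2 by decide))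
      unfold Nat.dist at h01 h12
      refine ⟨(⟨min (f 0) (f 2), by omega⟩, decide ((f 0 : ℕ) < f 2)), ?_⟩
      funext k
      fin_cases k <;> by_cases h : (f 0 : ℕ) < f 2 <;> simp [path3, h, Fin.ext_iff] <;> omega
    · rintro ⟨u, -, rfl⟩
      have hu := path3_val u
      unfold Nat.dist
      refine ⟨?_, by omega, by omega⟩
      intro i j h
      fin_cases i <;> fin_cases j <;> simp [Fin.ext_iff] at h ⊢ <;> omega
  rw [himage, card_image_of_injective _ path3_injective]
  simp [mul_comm]

def dartPair (x : (Fin m × Fin m) × (Bool × Bool)) : Fin 4 → Fin (m + 1) :=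
  ![(dart (x.1.1, x.2.1)).1, (dart (x.1.1, x.2.1)).2,
    (dart (x.1.2, x.2.2)).1, (dart (x.1.2, x.2.2)).2]

lemma dartPair_injective : Injective (dartPair (m := m)) := by
  rintro ⟨⟨l, l'⟩, s, t⟩ ⟨⟨k, k'⟩, s', t'⟩ h
  have h1 : dart (l, s) = dart (k, s') := Prod.ext (congrFun h 0) (congrFun h 1)
  have h2 : dart (l', t) = dart (k', t') := Prod.ext (congrFun h 2) (congrFun h 3)
  obtain ⟨rfl, rfl⟩ := Prod.ext_iff.1 (dart_injective h1)
  obtain ⟨rfl, rfl⟩ := Prod.ext_iff.1 (dart_injective h2)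
  rfl

lemma image_dartPair :
    (({x : Fin m × Fin m | 2 ≤ Nat.dist x.1 x.2} : Finset _) ×ˢ univ).image dartPair =
      ({f : Fin 4 → Fin (m + 1) |
        Injective f ∧ Nat.dist (f 0) (f 1) = 1 ∧ Nat.dist (f 2) (f 3) = 1} : Finset _) := by
  ext f
  simp only [mem_filter, mem_univ, true_and, mem_image, mem_product, and_true]
  constructor
  · rintro ⟨⟨⟨l, l'⟩, s, t⟩, hll', rfl⟩
    have hu := dart_val (l, s)
    have hv := dart_val (l', t)
    dsimp only at hu hv hll'
    unfold Nat.dist at hll' ⊢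
    refine ⟨?_, by simp [dartPair]; omega, by simp [dartPair]; omega⟩
    intro i j h
    fin_cases i <;> fin_cases j <;> simp [dartPair, Fin.ext_iff] at h ⊢ <;> omega
  · rintro ⟨hf, h01, h23⟩
    obtain ⟨u, hu⟩ := exists_dart_eq_iff.2 h01
    obtain ⟨v, hv⟩ := exists_dart_eq_iff.2 h23
    refine ⟨((u.1, v.1), (u.2, v.2)), ?_, ?_⟩
    · show 2 ≤ Nat.dist (u.1 : ℕ) v.1
      have hu' := dart_val u
      have hv' := dart_val v
      simp only [hu, hv] at hu' hv'
      have h02 := Fin.val_ne_of_ne (hf.ne (show (0 : Fin 4) ≠ 2 by decide))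
      have h03 := Fin.val_ne_of_ne (hf.ne (show (0 : Fin 4) ≠ 3 by decide))
      have h12 := Fin.val_ne_of_ne (hf.ne (show (1 : Fin 4) ≠ 2 by decide))
      have h13 := Fin.val_ne_of_ne (hf.ne (show (1 : Fin 4) ≠ 3 by decide))
      unfold Nat.dist
      omega
    · funext k
      fin_cases k <;> simp [dartPair, hu, hv]

lemma card_injective_fin_four_dist_eq_one :
    #{f : Fin 4 → Fin (m + 1) |
      Injective f ∧ Nat.dist (f 0) (f 1) = 1 ∧ Nat.dist (f 2) (f 3) = 1}
      = 4 * #{x : Fin m × Fin m | 2 ≤ Nat.dist x.1 x.2} := by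
  rw [← image_dartPair, card_image_of_injective _ dartPair_injective, card_product, card_univ]
  simp only [Fintype.card_prod, Fintype.card_bool]
  ring

end AdjacentValues

section Bonds

def IsBond {n : ℕ} (p : Perm (Fin (n + 1))) (i : Fin n) : Prop :=
  Nat.dist (p i.castSucc) (p i.succ) = 1

instance {n : ℕ} (p : Perm (Fin (n + 1))) (i : Fin n) : Decidable (IsBond p i) :=
  inferInstanceAs (Decidable (_ = _))

lemma C_sq {n : ℕ} (p : Perm (Fin (n + 1))) :
    C p ^ 2 = #{x : Fin n × Fin n | IsBond p x.1 ∧ IsBond p x.2} := by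
  change #{i | IsBond p i} ^ 2 = _
  rw [sq, ← card_product, ← filter_product, univ_product_univ]

variable (n : ℕ)

lemma card_isBond (i : Fin (n + 1)) :
    #{p : Perm (Fin (n + 2)) | IsBond p i} = n ! * (2 * (n + 1)) := by
  let e : Fin 2 ↪ Fin (n + 2) := ⟨![i.castSucc, i.succ], by
    intro a b h; fin_cases a <;> fin_cases b <;> simp_all [Fin.ext_iff]⟩
  have := card_filter_perm_comp_embedding e fun f => Nat.dist (f 0) (f 1) = 1
  rw [card_injective_fin_two_dist_eq_one, Fintype.card_fin, Fintype.card_fin,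
    show n + 2 - 2 = n by omega] at this
  exact this

lemma card_isBond_and_isBond_of_succ (i j : Fin (n + 1)) (hij : (j : ℕ) = i + 1) :
    #{p : Perm (Fin (n + 2)) | IsBond p i ∧ IsBond p j} = (n - 1)! * (2 * n) := by
  let e : Fin 3 ↪ Fin (n + 2) := ⟨![i.castSucc, i.succ, j.succ], by
    intro a b h; fin_cases a <;> fin_cases b <;> simp [Fin.ext_iff] at h ⊢ <;> omega⟩
  have := card_filter_perm_comp_embedding e fun f =>
    Nat.dist (f 0) (f 1) = 1 ∧ Nat.dist (f 1) (f 2) = 1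
  rw [card_injective_fin_three_dist_eq_one, Fintype.card_fin, Fintype.card_fin,
    show n + 2 - 3 = n - 1 by omega] at this
  have hj : j.castSucc = i.succ := Fin.ext (by simp [hij])
  simp only [IsBond, hj]
  exact this

lemma card_isBond_and_isBond_of_two_le_dist (i j : Fin (n + 1)) (hij : 2 ≤ Nat.dist i j) :
    #{p : Perm (Fin (n + 2)) | IsBond p i ∧ IsBond p j} = (n - 2)! * (4 * (n * n - n)) := by
  let e : Fin 4 ↪ Fin (n + 2) := ⟨![i.castSucc, i.succ, j.castSucc, j.succ], by
    unfold Nat.dist at hij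
    intro a b h; fin_cases a <;> fin_cases b <;> simp [Fin.ext_iff] at h ⊢ <;> omega⟩
  have := card_filter_perm_comp_embedding e fun f =>
    Nat.dist (f 0) (f 1) = 1 ∧ Nat.dist (f 2) (f 3) = 1
  rw [card_injective_fin_four_dist_eq_one, card_two_le_dist, Fintype.card_fin,
    Fintype.card_fin, show n + 2 - 4 = n - 2 by omega] at this
  exact this

lemma card_isBond_and_isBond (i j : Fin (n + 1)) :
    #{p : Perm (Fin (n + 2)) | IsBond p i ∧ IsBond p j} =
      if i = j then n ! * (2 * (n + 1))
      else if Nat.dist i j = 1 then (n - 1)! * (2 * n)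
      else (n - 2)! * (4 * (n * n - n)) := by
  split_ifs with hij hdist
  · simp only [hij, and_self, card_isBond]
  · unfold Nat.dist at hdist
    rcases (by omega : (j : ℕ) = i + 1 ∨ (i : ℕ) = j + 1) with h | h
    · exact card_isBond_and_isBond_of_succ n i j h
    · simp only [and_comm (a := IsBond _ i)]
      exact card_isBond_and_isBond_of_succ n j i h
  · refine card_isBond_and_isBond_of_two_le_dist n i j ?_
    rw [Fin.ext_iff] at hij
    unfold Nat.dist at hdist ⊢
    omega

lemma sum_C : ∑ p : Perm (Fin (n + 2)), C p = 2 * (n + 1) ^ 2 * n ! := by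
  have := sum_card_bipartiteAbove_eq_sum_card_bipartiteBelow (s := univ) (t := univ)
    (fun (p : Perm (Fin (n + 2))) i => IsBond p i)
  simp only [bipartiteAbove, bipartiteBelow, card_isBond] at this
  rw [show ∑ p : Perm (Fin (n + 2)), C p = ∑ p, #{i | IsBond p i} from rfl, this]
  simp only [sum_const, card_univ, Fintype.card_fin, smul_eq_mul]
  ring

lemma sum_card_isBond_and_isBond :
    ∑ x : Fin (n + 1) × Fin (n + 1), #{p : Perm (Fin (n + 2)) | IsBond p x.1 ∧ IsBond p x.2} =
      (n + 1) * (n ! * (2 * (n + 1))) + 2 * n * ((n - 1)! * (2 * n)) +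
        (n * n - n) * ((n - 2)! * (4 * (n * n - n))) := by
  have hdiag : #{x : Fin (n + 1) × Fin (n + 1) | x.1 = x.2} = n + 1 := by
    have := diag_card (univ : Finset (Fin (n + 1)))
    rwa [diag_eq_filter, univ_product_univ, card_univ, Fintype.card_fin] at this
  have hadj : #{x : Fin (n + 1) × Fin (n + 1) | ¬x.1 = x.2 ∧ Nat.dist x.1 x.2 = 1} = 2 * n := by
    rw [← card_dist_eq_one]
    congr 1
    refine filter_congr fun x _ => ⟨And.right, fun h => ⟨fun hx => ?_, h⟩⟩
    simp [hx] at h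
  have hfar : #{x : Fin (n + 1) × Fin (n + 1) | ¬x.1 = x.2 ∧ ¬Nat.dist x.1 x.2 = 1}
      = n * n - n := by
    rw [← card_two_le_dist]
    congr 1
    refine filter_congr fun x _ => ?_
    rw [Fin.ext_iff]
    unfold Nat.dist
    omega
  simp only [card_isBond_and_isBond]
  rw [sum_ite, sum_ite, sum_const, sum_const, sum_const, filter_filter, filter_filter, hdiag, hadj,
    hfar, smul_eq_mul, smul_eq_mul, smul_eq_mul, add_assoc]

lemma sum_C_sq : ∑ p : Perm (Fin (n + 2)), C p ^ 2 = (2 * (n + 1) ^ 2 + 4 * n ^ 2) * n ! := by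
  have := sum_card_bipartiteAbove_eq_sum_card_bipartiteBelow (s := univ) (t := univ)
    (fun (p : Perm (Fin (n + 2))) (x : Fin (n + 1) × Fin (n + 1)) => IsBond p x.1 ∧ IsBond p x.2)
  simp only [bipartiteAbove, bipartiteBelow, ← C_sq] at this
  rw [this, sum_card_isBond_and_isBond, ← Nat.mul_sub_one]
  rcases n with _ | _ | k
  · simp
  · simp
  · rw [show k + 1 + 1 - 1 = k + 1 by omega, show k + 1 + 1 - 2 = k by omega]
    simp only [Nat.factorial_succ]
    ring

end Bonds

theorem stmt8 (n : ℕ) :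
    (∑ p : Equiv.Perm (Fin (n + 2)), (C p : ℚ) ^ 2) / (Nat.factorial (n + 2))
      - ((∑ p : Equiv.Perm (Fin (n + 2)), (C p : ℚ)) / (Nat.factorial (n + 2))) ^ 2
      = 4 * n ^ 2 / ((n + 2) * (n + 1)) + 2 * (n + 1) / (n + 2)
        - 4 * (n + 1) ^ 2 / (n + 2) ^ 2 := by
  have hsum : ∑ p : Perm (Fin (n + 2)), (C p : ℚ) = 2 * (n + 1) ^ 2 * n ! := by
    exact_mod_cast sum_C n
  have hsum_sq :
      ∑ p : Perm (Fin (n + 2)), (C p : ℚ) ^ 2 = (2 * (n + 1) ^ 2 + 4 * n ^ 2) * n ! := by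
    exact_mod_cast sum_C_sq n
  have hfact : ((n + 2)! : ℚ) = (n + 2) * (n + 1) * n ! := by
    push_cast [Nat.factorial_succ]
    ring
  rw [hsum, hsum_sq, hfact]
  field_simp
  ring
end

section
/- If p is a permutation of length n with minimum gap mg(p) = k, and i < j are indices with d_p(i,j) = k, then the span of the entries p_i and p_j has exactly k − 2 elements. -/
open Finset

/-!
Let `i < j` realise the minimum gap `k`. An index `m` lying strictly between `i` and `j` in
both coordinates would be strictly closer to `i` than `j` is, contradicting minimality. Hence
the span is the disjoint union of the `j - i - 1` positions between `i` and `j` and the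
`|p i - p j| - 1` positions whose values lie between `p i` and `p j`, which gives
`(j - i - 1) + (|p i - p j| - 1) = k - 2` elements.
-/

lemma mgF_le_dist {n : ℕ} (f : Fin n → ℕ) {a b : Fin n} (hab : a < b) :
    mgF f ≤ Nat.dist a b + Nat.dist (f a) (f b) :=
  Nat.sInf_le ⟨a, b, hab, rfl⟩

lemma Fin.card_Ioo_min_max {n : ℕ} (a b : Fin n) :
    #(Ioo (min a b) (max a b)) = Nat.dist a b - 1 := by
  rw [Fin.card_Ioo]
  rcases le_total a b with h | h
  · rw [max_eq_right h, min_eq_left h, Nat.dist_eq_sub_of_le h]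
  · rw [max_eq_left h, min_eq_right h, Nat.dist_eq_sub_of_le_right h]

lemma Nat.dist_add_dist_lt_of_between {i m j x y z : ℕ} (him : i < m) (hmj : m < j)
    (hy : min x z < y) (hy' : y < max x z) :
    Nat.dist i m + Nat.dist x y < Nat.dist i j + Nat.dist x z := by
  simp only [Nat.dist] at *
  omega

lemma span_eq_union {n : ℕ} (p : Equiv.Perm (Fin n)) (i j : Fin n) :
    span p i j = Ioo i j ∪ (Ioo (min (p i) (p j)) (max (p i) (p j))).map p.symm.toEmbedding := by
  ext m
  simp [span]

lemma disjoint_Ioo_of_dist_eq_mg {n : ℕ} (p : Equiv.Perm (Fin n)) {i j : Fin n}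
    (hd : Nat.dist i.val j.val + Nat.dist (p i).val (p j).val = mg p) :
    Disjoint (Ioo i j) ((Ioo (min (p i) (p j)) (max (p i) (p j))).map p.symm.toEmbedding) := by
  refine disjoint_left.mpr fun m hm hm' => ?_
  obtain ⟨him, hmj⟩ := mem_Ioo.mp hm
  rw [mem_map_equiv, Equiv.symm_symm, mem_Ioo, Fin.lt_def, Fin.lt_def, Fin.coe_min,
    Fin.coe_max] at hm'
  have hcloser := Nat.dist_add_dist_lt_of_between him hmj hm'.1 hm'.2
  exact (mgF_le_dist (fun m => (p m).val) him).not_gt (hcloser.trans_eq hd)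

theorem stmt10 {n k : ℕ} (p : Equiv.Perm (Fin n)) (hmg : mg p = k) (i j : Fin n)
    (hij : i < j) (hd : Nat.dist i.val j.val + Nat.dist (p i).val (p j).val = k) :
    (span p i j).card = k - 2 := by
  subst hmg
  have hpij : (p i).val ≠ (p j).val := fun h => hij.ne (p.injective (Fin.ext h))
  rw [span_eq_union, card_union_of_disjoint (disjoint_Ioo_of_dist_eq_mg p hd), card_map,
    Fin.card_Ioo_min_max, Fin.card_Ioo, ← hd]
  have hij' : i.val < j.val := hij
  simp only [Nat.dist] at hpij ⊢
  omega
end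

section
/- If a permutation p of length n satisfies |D_k(p)| = C(n,k), then |D_j(p)| = C(n,j) for all 1 ≤ j ≤ k. -/
open Finset

/-! `Dk p k` has `C(n,k)` elements exactly when `patList p` is injective on `k`-sets.
Standardizing commutes with deleting the `i`-th entry, so two sets with the same pattern keep
equal patterns when the `i`-th remaining position is added to both. Adding two different
positions and intersecting shows that injectivity on `(t+1)`-sets passes down to `t`-sets
as long as `t + 2 ≤ n`. -/

namespace List

variable {α β : Type*} [LinearOrder α] [LinearOrder β]

def rank (l : List α) (v : α) : ℕ := (l.filter fun w => w < v).length

def pattern (l : List α) : List ℕ := l.map l.rank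

lemma rank_strictMonoOn (l : List α) : StrictMonoOn l.rank {v | v ∈ l} := by
  intro v hv v' _ hvv'
  have hsub : (l.filter fun w => w < v).Sublist (l.filter fun w => w < v') :=
    monotone_filter_right l fun w hw => by
      simp only [decide_eq_true_eq] at hw ⊢
      exact hw.trans hvv'
  refine lt_of_le_of_ne hsub.length_le fun hlen => ?_
  have hmem : v ∈ l.filter fun w => w < v' := mem_filter.mpr ⟨hv, by simpa using hvv'⟩
  rw [← hsub.eq_of_length hlen] at hmem
  simp at hmem

lemma pattern_map_of_strictMonoOn {f : α → β} {l : List α}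
    (hf : StrictMonoOn f {v | v ∈ l}) :
    (l.map f).pattern = l.pattern := by
  refine (map_map ..).trans (map_congr_left fun v hv => ?_)
  rw [Function.comp_apply, rank, filter_map, length_map, rank]
  congr 1
  exact filter_congr fun w hw => by simp [hf.lt_iff_lt hw hv]

lemma pattern_eraseIdx_pattern (l : List α) (i : ℕ) :
    (l.pattern.eraseIdx i).pattern = (l.eraseIdx i).pattern := by
  rw [show l.pattern = l.map l.rank from rfl, eraseIdx_map]
  exact pattern_map_of_strictMonoOn
    ((rank_strictMonoOn l).mono fun _ hv => mem_of_mem_eraseIdx hv)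

end List

lemma Finset.sort_erase {α : Type*} [LinearOrder α] (s : Finset α) (a : α) :
    (s.erase a).sort (· ≤ ·) = (s.sort (· ≤ ·)).erase a := by
  refine List.Perm.eq_of_pairwise' (pairwise_sort _ _)
    ((pairwise_sort s (· ≤ ·)).sublist (List.erase_sublist (l := s.sort (· ≤ ·)))) ?_
  rw [← Multiset.coe_eq_coe, sort_eq, ← Multiset.coe_erase, sort_eq, erase_val]

lemma Finset.insert_sort_compl_inter {α : Type*} [LinearOrder α] [Fintype α] (S : Finset α)
    {i j : ℕ} (hi : i < (Sᶜ.sort (· ≤ ·)).length) (hj : j < (Sᶜ.sort (· ≤ ·)).length)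
    (hij : i ≠ j) :
    insert (Sᶜ.sort (· ≤ ·))[i] S ∩ insert (Sᶜ.sort (· ≤ ·))[j] S = S := by
  have hne : (Sᶜ.sort (· ≤ ·))[i] ≠ (Sᶜ.sort (· ≤ ·))[j] :=
    fun h => hij ((sort_nodup _ _).getElem_inj_iff.mp h)
  ext x
  simp only [mem_inter, mem_insert]
  constructor
  · rintro ⟨hx | hx, hx' | hx'⟩
    · exact absurd (hx.symm.trans hx') hne
    all_goals assumption
  · exact fun hx => ⟨Or.inr hx, Or.inr hx⟩

section Patterns

variable {n : ℕ} (p : Equiv.Perm (Fin n))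

lemma patList_eq_pattern (S : Finset (Fin n)) :
    patList p S = ((Sᶜ.sort (· ≤ ·)).map fun t => (p t).val).pattern := rfl

lemma patList_insert_sort_compl (S : Finset (Fin n)) {i : ℕ}
    (hi : i < (Sᶜ.sort (· ≤ ·)).length) :
    patList p (insert (Sᶜ.sort (· ≤ ·))[i] S) = ((patList p S).eraseIdx i).pattern := by
  rw [patList_eq_pattern, patList_eq_pattern, List.pattern_eraseIdx_pattern, compl_insert,
    sort_erase, (sort_nodup _ _).erase_getElem, List.eraseIdx_map]

lemma card_insert_sort_compl (S : Finset (Fin n)) {i : ℕ}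
    (hi : i < (Sᶜ.sort (· ≤ ·)).length) :
    (insert (Sᶜ.sort (· ≤ ·))[i] S).card = S.card + 1 :=
  card_insert_of_notMem (mem_compl.mp ((mem_sort _).mp (List.getElem_mem hi)))

lemma injOn_patList_of_succ {t : ℕ} (htn : t + 2 ≤ n)
    (h : Set.InjOn (patList p) {S | S.card = t + 1}) :
    Set.InjOn (patList p) {S | S.card = t} := by
  intro S (hS : S.card = t) T (hT : T.card = t) hST
  have hS2 : 2 ≤ (Sᶜ.sort (· ≤ ·)).length := by
    rw [length_sort, card_compl, Fintype.card_fin, hS]; omega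
  have hT2 : 2 ≤ (Tᶜ.sort (· ≤ ·)).length := by
    rw [length_sort, card_compl, Fintype.card_fin, hT]; omega
  have hinsert (i : ℕ) (hi : i < 2) :
      insert (Sᶜ.sort (· ≤ ·))[i] S = insert (Tᶜ.sort (· ≤ ·))[i] T :=
    h (by simp [card_insert_sort_compl, hS]) (by simp [card_insert_sort_compl, hT])
      (by rw [patList_insert_sort_compl, patList_insert_sort_compl, hST])
  rw [← insert_sort_compl_inter S (i := 0) (j := 1) (by omega) (by omega) (by omega),
    ← insert_sort_compl_inter T (i := 0) (j := 1) (by omega) (by omega) (by omega),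
    hinsert 0 (by omega), hinsert 1 (by omega)]

lemma injOn_patList_of_le {j k : ℕ} (hkn : k < n) (hjk : j ≤ k)
    (h : Set.InjOn (patList p) {S | S.card = k}) :
    Set.InjOn (patList p) {S | S.card = j} := by
  induction hjk using Nat.decreasingInduction with
  | self => exact h
  | of_succ t htk ih => exact injOn_patList_of_succ p (by omega) ih

lemma card_Dk_eq_choose_iff (k : ℕ) :
    (Dk p k).card = n.choose k ↔ Set.InjOn (patList p) {S | S.card = k} := by
  have hcard : (powersetCard k (univ : Finset (Fin n))).card = n.choose k := by simp
  rw [Dk, ← powerset_univ, ← powersetCard_eq_filter, ← hcard, card_image_iff]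
  exact Iff.of_eq (congrArg _ (Set.ext fun _ => mem_powersetCard_univ))

end Patterns

theorem stmt13 {n k : ℕ} (hkn : k < n) (p : Equiv.Perm (Fin n))
    (h : (Dk p k).card = n.choose k) :
    ∀ j : ℕ, 1 ≤ j → j ≤ k → (Dk p j).card = n.choose j := fun _ _ hjk =>
  (card_Dk_eq_choose_iff p _).mpr
    (injOn_patList_of_le p hkn hjk ((card_Dk_eq_choose_iff p k).mp h))
end
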